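/- arXiv:1206.5081 — 7 statements merged into one kernel-verified Lean document; each statement's English description precedes it below -/
import Mathlib

section
/- For every real μ > 0 define α_μ = (1/√μ)·arctan(k₀²/√μ) and β_μ = (1/√μ)·arctan(k₁²/√μ). Then the equation 1 − α_μ − β_μ = 1/μ has exactly one solution μ in (0, ∞). -/
open MeasureTheory Set Real

/-- `alphaCoef k μ = (1/√μ) · arctan(k²/√μ)`. -/
noncomputable def alphaCoef (k μ : ℝ) : ℝ :=
  (1 / Real.sqrt μ) * Real.arctan (k ^ 2 / Real.sqrt μ)

lemma alphaCoef_nonneg (k : ℝ) {μ : ℝ} (hμ : 0 < μ) : 0 ≤ alphaCoef k μ := by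
  unfold alphaCoef
  have h1 : 0 < Real.sqrt μ := Real.sqrt_pos.mpr hμ
  have h2 : 0 ≤ Real.arctan (k ^ 2 / Real.sqrt μ) :=
    by rw [← Real.arctan_zero]; exact Real.arctan_strictMono.monotone (div_nonneg (sq_nonneg k) h1.le)
  positivity

lemma alphaCoef_anti (k : ℝ) {a b : ℝ} (ha : 0 < a) (hab : a ≤ b) :
    alphaCoef k b ≤ alphaCoef k a := by
  unfold alphaCoef
  have hsa : 0 < Real.sqrt a := Real.sqrt_pos.mpr ha
  have hsab : Real.sqrt a ≤ Real.sqrt b := Real.sqrt_le_sqrt hab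
  have hsb : 0 < Real.sqrt b := lt_of_lt_of_le hsa hsab
  have harg : k ^ 2 / Real.sqrt b ≤ k ^ 2 / Real.sqrt a := by
    gcongr

  have harc : Real.arctan (k ^ 2 / Real.sqrt b) ≤ Real.arctan (k ^ 2 / Real.sqrt a) :=
    Real.arctan_strictMono.monotone harg
  have hnn : 0 ≤ Real.arctan (k ^ 2 / Real.sqrt b) :=
    by rw [← Real.arctan_zero]; exact Real.arctan_strictMono.monotone (div_nonneg (sq_nonneg k) hsb.le)
  have hinv : 1 / Real.sqrt b ≤ 1 / Real.sqrt a := by gcongr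
  exact mul_le_mul hinv harc hnn (by positivity)

lemma alphaCoef_le (k : ℝ) {μ : ℝ} (hμ : 0 < μ) :
    alphaCoef k μ ≤ (1 / Real.sqrt μ) * (Real.pi / 2) := by
  unfold alphaCoef
  have h1 : 0 < Real.sqrt μ := Real.sqrt_pos.mpr hμ
  exact mul_le_mul_of_nonneg_left (Real.arctan_lt_pi_div_two _).le (by positivity)

lemma alphaCoef_continuousOn (k : ℝ) :
    ContinuousOn (fun μ => alphaCoef k μ) (Set.Ioi (0:ℝ)) := by
  unfold alphaCoef
  have hs : ∀ μ ∈ Set.Ioi (0:ℝ), Real.sqrt μ ≠ 0 := fun μ hμ =>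
    (Real.sqrt_pos.mpr hμ).ne'
  exact (continuousOn_const.div (Real.continuous_sqrt.continuousOn) hs).mul
    (Real.continuous_arctan.comp_continuousOn
      (continuousOn_const.div (Real.continuous_sqrt.continuousOn) hs))

/-- The equation `1 - α_μ - β_μ = 1/μ` has exactly one solution `μ` in `(0, ∞)`. -/
theorem stmt0 (k0 k1 : ℝ) (hk0 : 0 ≤ k0) (hk01 : k0 ≤ k1) :
    ∃! μ : ℝ, 0 < μ ∧ 1 - alphaCoef k0 μ - alphaCoef k1 μ = 1 / μ := by
  set F : ℝ → ℝ := fun μ => 1 - alphaCoef k0 μ - alphaCoef k1 μ - 1 / μ with hF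
  have hmono : StrictMonoOn F (Set.Ioi (0:ℝ)) := by
    intro a ha b hb hab
    simp only [Set.mem_Ioi] at ha hb
    have h0 := alphaCoef_anti k0 ha hab.le
    have h1 := alphaCoef_anti k1 ha hab.le
    have hinv : 1 / b < 1 / a := by
      apply div_lt_div_of_pos_left one_pos ha hab
    simp only [hF]
    linarith
  have hcont : ContinuousOn F (Set.Ioi (0:ℝ)) := by
    apply ContinuousOn.sub
    apply ContinuousOn.sub
    apply ContinuousOn.sub continuousOn_const (alphaCoef_continuousOn k0)
    exact alphaCoef_continuousOn k1
    exact continuousOn_const.div continuousOn_id (fun μ hμ => ne_of_gt hμ)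
  -- F (1/2) ≤ 0
  have hneg : F (1/2) ≤ 0 := by
    have h0 := alphaCoef_nonneg k0 (by norm_num : (0:ℝ) < 1/2)
    have h1 := alphaCoef_nonneg k1 (by norm_num : (0:ℝ) < 1/2)
    simp only [hF]
    norm_num
    linarith
  -- F 200 ≥ 0
  have hpos : 0 ≤ F 200 := by
    have h200 : (0:ℝ) < 200 := by norm_num
    have h14 : (14:ℝ) ≤ Real.sqrt 200 := by
      rw [show (14:ℝ) = Real.sqrt (14^2) by rw [Real.sqrt_sq]; norm_num]
      exact Real.sqrt_le_sqrt (by norm_num)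
    have hs : 0 < Real.sqrt 200 := lt_of_lt_of_le (by norm_num) h14
    have hb : (1 / Real.sqrt 200) * (Real.pi / 2) ≤ Real.pi / 28 := by
      rw [div_mul_eq_mul_div, one_mul]
      rw [div_le_div_iff₀ (by positivity) (by norm_num)]
      nlinarith [Real.pi_pos, h14]
    have h0 := le_trans (alphaCoef_le k0 h200) hb
    have h1 := le_trans (alphaCoef_le k1 h200) hb
    have hπ : Real.pi ≤ 4 := Real.pi_le_four
    simp only [hF]
    nlinarith
  -- IVT
  have hsub : Set.Icc (1/2 : ℝ) 200 ⊆ Set.Ioi 0 := fun x hx => lt_of_lt_of_le (by norm_num) hx.1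
  have hivt := intermediate_value_Icc (by norm_num : (1/2:ℝ) ≤ 200) (hcont.mono hsub)
  have h0mem : (0:ℝ) ∈ Set.Icc (F (1/2)) (F 200) := ⟨hneg, hpos⟩
  obtain ⟨μ, hμmem, hμ0⟩ := hivt h0mem
  have hμpos : 0 < μ := lt_of_lt_of_le (by norm_num) hμmem.1
  refine ⟨μ, ⟨hμpos, by simp only [hF] at hμ0; linarith⟩, ?_⟩
  rintro ν ⟨hνpos, hν⟩
  have hFν : F ν = 0 := by simp only [hF]; linarith
  exact hmono.injOn (Set.mem_Ioi.mpr hνpos) (Set.mem_Ioi.mpr hμpos) (hFν.trans hμ0.symm)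
end

section
/- If k₀² + k₁² ≤ 1, then sup{λ₁(q) : q ∈ L¹[0,1], q ≤ 0 a.e., ∫₀¹ q dx = −1} = k₀² + k₁² − 1. -/
open MeasureTheory Set Real Filter

/-- A test function on `[0,1]`: `y` is absolutely continuous on `[0,1]` with
derivative `g` belonging to `L²[0,1]`. -/
def IsTest (y g : ℝ → ℝ) : Prop :=
  (∀ x ∈ Icc (0:ℝ) 1, y x = y 0 + ∫ t in (0:ℝ)..x, g t) ∧
  IntegrableOn g (Icc (0:ℝ) 1) ∧
  IntegrableOn (fun x => (g x) ^ 2) (Icc (0:ℝ) 1)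

/-- The set of Rayleigh quotients of test functions for the Sturm–Liouville problem
`-y'' + q y = λ y`, `y'(0) - k₀² y(0) = 0`, `y'(1) + k₁² y(1) = 0`. -/
def RayleighSet (k0 k1 : ℝ) (q : ℝ → ℝ) : Set ℝ :=
  { r : ℝ | ∃ y g : ℝ → ℝ, IsTest y g ∧ (0 < ∫ x in (0:ℝ)..1, (y x) ^ 2) ∧
      r = ((∫ x in (0:ℝ)..1, ((g x) ^ 2 + q x * (y x) ^ 2))
            + k0 ^ 2 * (y 0) ^ 2 + k1 ^ 2 * (y 1) ^ 2) / (∫ x in (0:ℝ)..1, (y x) ^ 2) }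

/-- The first eigenvalue `λ₁(q)` defined as the infimum of the Rayleigh quotient. -/
noncomputable def lam1 (k0 k1 : ℝ) (q : ℝ → ℝ) : ℝ :=
  sInf (RayleighSet k0 k1 q)

/-!
Testing with `y ≡ 1` gives `λ₁(q) ≤ k₀² + k₁² - 1` whenever `∫ q = -1`; the infimum is finite
because `y(x)² ≤ 2‖y‖² + ‖y'‖²` on `[0,1]`.

Conversely, take the potential equal to `k₀² + k₁² - 1` plus wells of depth `m²k₀²` and `m²k₁²` on
intervals of length `m⁻²` at the two endpoints: it is nonpositive with integral `-1`. Since `y²`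
varies on such an interval by `O(m⁻¹)(‖y‖² + ‖y'‖²)`, the wells cost at most the boundary terms
`k₀² y(0)² + k₁² y(1)²` plus `2m⁻¹(‖y‖² + ‖y'‖²)`, so `λ₁ ≥ k₀² + k₁² - 1 - 2/m`.
-/

theorem intervalIntegral_zero_one_eq_setIntegral_Icc (f : ℝ → ℝ) :
    ∫ x in (0:ℝ)..1, f x = ∫ x in Icc 0 1, f x := by
  rw [intervalIntegral.integral_of_le zero_le_one, integral_Icc_eq_integral_Ioc]

theorem setIntegral_Icc_sq_le {f : ℝ → ℝ} {c d C : ℝ} (hcd : c ≤ d)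
    (hf : ∀ x ∈ Icc c d, f x ^ 2 ≤ C) : ∫ x in Icc c d, f x ^ 2 ≤ C * (d - c) := by
  refine (Real.le_norm_self _).trans ((norm_setIntegral_le_of_norm_le_const measure_Icc_lt_top
    fun x hx => ?_).trans_eq (by rw [Real.volume_real_Icc_of_le hcd]))
  rw [Real.norm_of_nonneg (sq_nonneg _)]
  exact hf x hx

namespace IsTest

variable {y g : ℝ → ℝ}

theorem continuousOn (h : IsTest y g) : ContinuousOn y (Icc 0 1) := by
  have := intervalIntegral.continuousOn_primitive_interval (a := 0) (b := 1) (μ := volume)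
    (f := g) (by rw [uIcc_of_le zero_le_one]; exact h.2.1)
  rw [uIcc_of_le zero_le_one] at this
  exact (continuousOn_const.add this).congr h.1

theorem integrableOn_sq (h : IsTest y g) : IntegrableOn (fun x => y x ^ 2) (Icc 0 1) :=
  (h.continuousOn.pow 2).integrableOn_Icc

theorem integrableOn_mul_sq {q : ℝ → ℝ} (h : IsTest y g) (hq : IntegrableOn q (Icc 0 1)) :
    IntegrableOn (fun x => q x * y x ^ 2) (Icc 0 1) :=
  hq.mul_continuousOn (h.continuousOn.pow 2 : ContinuousOn (fun x => y x ^ 2) _) isCompact_Icc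

theorem sq_sub_sq_eq_integral (h : IsTest y g) {a b : ℝ} (ha : a ∈ Icc (0:ℝ) 1)
    (hb : b ∈ Icc (0:ℝ) 1) :
    y b ^ 2 - y a ^ 2 = ∫ x in a..b, 2 * y x * g x := by
  -- `y` agrees on `[0,1]` with the absolutely continuous `F`, whose derivative is `g` a.e.
  set F : ℝ → ℝ := fun x => y 0 + ∫ t in (0:ℝ)..x, g t
  have hg : IntervalIntegrable g volume 0 1 :=
    (intervalIntegrable_iff_integrableOn_Icc_of_le zero_le_one).2 h.2.1
  have hsub : uIcc a b ⊆ uIcc 0 1 := by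
    rw [uIcc_of_le zero_le_one]
    exact uIcc_subset_Icc ha hb
  have hF : AbsolutelyContinuousOnInterval F a b :=
    (contDiffOn_const.absolutelyContinuousOnInterval.add
      (hg.absolutelyContinuousOnInterval_intervalIntegral (by simp))).mono hsub
  rw [h.1 a ha, h.1 b hb, sq, sq, ← (hF.fun_mul hF).integral_deriv_eq_sub]
  refine intervalIntegral.integral_congr_ae ?_
  filter_upwards [hg.ae_hasDerivAt_integral] with x hx hxab
  have hx01 : x ∈ uIcc (0:ℝ) 1 := hsub (uIoc_subset_uIcc hxab)
  have hFx : HasDerivAt F (g x) x := (hx hx01 0 (by simp)).const_add _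
  rw [show (fun x => F x * F x) = F * F from rfl, (hFx.mul hFx).deriv,
    h.1 x (by rwa [uIcc_of_le zero_le_one] at hx01)]
  ring

theorem sq_le_sq_add (h : IsTest y g) {c d w : ℝ} (hcd : Icc c d ⊆ Icc 0 1) (hw : 0 < w)
    {p t : ℝ} (hp : p ∈ Icc c d) (ht : t ∈ Icc c d) :
    y p ^ 2 ≤ y t ^ 2 + (w * ∫ x in Icc c d, y x ^ 2) + w⁻¹ * ∫ x in Icc c d, g x ^ 2 := by
  have hy2 : IntegrableOn (fun x => y x ^ 2) (Icc c d) := h.integrableOn_sq.mono_set hcd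
  have hg2 : IntegrableOn (fun x => g x ^ 2) (Icc c d) := h.2.2.mono_set hcd
  have hbound : IntegrableOn (fun x => w * y x ^ 2 + w⁻¹ * g x ^ 2) (Icc c d) :=
    (hy2.const_mul w).add (hg2.const_mul w⁻¹)
  have huIoc : uIoc t p ⊆ Icc c d := uIoc_subset_uIcc.trans (uIcc_subset_Icc ht hp)
  have := calc
    y p ^ 2 - y t ^ 2 ≤ ‖∫ x in t..p, 2 * y x * g x‖ := by
      rw [h.sq_sub_sq_eq_integral (hcd ht) (hcd hp)]
      exact le_abs_self _
    _ ≤ ∫ x in uIoc t p, ‖2 * y x * g x‖ := intervalIntegral.norm_integral_le_integral_norm_uIoc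
    _ ≤ ∫ x in uIoc t p, (w * y x ^ 2 + w⁻¹ * g x ^ 2) :=
      integral_mono_of_nonneg (ae_of_all _ fun _ => norm_nonneg _) (hbound.mono_set huIoc)
        (ae_of_all _ fun x => by
          simpa [abs_mul, sq_abs] using two_mul_le_add_mul_sq (a := |y x|) (b := |g x|) hw)
    _ ≤ ∫ x in Icc c d, (w * y x ^ 2 + w⁻¹ * g x ^ 2) :=
      setIntegral_mono_set hbound (ae_of_all _ fun _ => by positivity) huIoc.eventuallyLE
    _ = (w * ∫ x in Icc c d, y x ^ 2) + w⁻¹ * ∫ x in Icc c d, g x ^ 2 := by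
      rw [integral_add (hy2.const_mul w) (hg2.const_mul w⁻¹), integral_const_mul,
        integral_const_mul]
  linarith

theorem sq_le_two_mul_integral_add (h : IsTest y g) {x : ℝ} (hx : x ∈ Icc (0:ℝ) 1) :
    y x ^ 2 ≤ 2 * (∫ t in Icc 0 1, y t ^ 2) + ∫ t in Icc 0 1, g t ^ 2 := by
  have hbound : ∀ t ∈ Icc (0:ℝ) 1,
      y x ^ 2 - ((∫ t in Icc 0 1, y t ^ 2) + ∫ t in Icc 0 1, g t ^ 2) ≤ y t ^ 2 := by
    intro t ht
    have := h.sq_le_sq_add subset_rfl one_pos hx ht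
    rw [one_mul, inv_one, one_mul] at this
    linarith
  have := setIntegral_ge_of_const_le_real measurableSet_Icc measure_Icc_lt_top.ne hbound
    h.integrableOn_sq
  rw [Real.volume_real_Icc_of_le zero_le_one, sub_zero, mul_one] at this
  linarith

theorem sq_mul_setIntegral_le {c d m : ℝ} (h : IsTest y g) (hcd : Icc c d ⊆ Icc 0 1)
    (hm : 0 < m) (hδ : d - c = (m ^ 2)⁻¹) {p : ℝ} (hp : p ∈ Icc c d) :
    m ^ 2 * ∫ x in Icc c d, y x ^ 2 ≤
      y p ^ 2 + 2 * ((∫ x in Icc 0 1, y x ^ 2) + ∫ x in Icc 0 1, g x ^ 2) * m⁻¹ := by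
  set P := ∫ x in Icc c d, y x ^ 2
  set Q := ∫ x in Icc c d, g x ^ 2
  set Y := ∫ x in Icc 0 1, y x ^ 2
  set G := ∫ x in Icc 0 1, g x ^ 2
  have hcd' : c ≤ d := by
    rw [← sub_nonneg, hδ]
    positivity
  have hP : P ≤ (y p ^ 2 + m * P + m⁻¹ * Q) * (m ^ 2)⁻¹ := by
    rw [← hδ]
    exact setIntegral_Icc_sq_le hcd' fun t ht => h.sq_le_sq_add hcd hm ht hp
  have hPY : P ≤ (2 * Y + G) * (m ^ 2)⁻¹ := by
    rw [← hδ]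
    exact setIntegral_Icc_sq_le hcd' fun t ht => h.sq_le_two_mul_integral_add (hcd ht)
  have hQG : Q ≤ G :=
    setIntegral_mono_set h.2.2 (ae_of_all _ fun _ => sq_nonneg _) hcd.eventuallyLE
  have h1 : m ^ 2 * P ≤ y p ^ 2 + m * P + m⁻¹ * Q :=
    calc m ^ 2 * P ≤ m ^ 2 * ((y p ^ 2 + m * P + m⁻¹ * Q) * (m ^ 2)⁻¹) := by gcongr
      _ = y p ^ 2 + m * P + m⁻¹ * Q := by field_simp
  have h2 : m * P ≤ (2 * Y + G) * m⁻¹ :=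
    calc m * P ≤ m * ((2 * Y + G) * (m ^ 2)⁻¹) := by gcongr
      _ = (2 * Y + G) * m⁻¹ := by field_simp
  have h3 : m⁻¹ * Q ≤ m⁻¹ * G := by gcongr
  linarith

end IsTest

noncomputable def rayleighForm (k0 k1 : ℝ) (q y g : ℝ → ℝ) : ℝ :=
  (∫ x in (0:ℝ)..1, ((g x) ^ 2 + q x * (y x) ^ 2)) + k0 ^ 2 * (y 0) ^ 2 + k1 ^ 2 * (y 1) ^ 2

section Rayleigh

variable {k0 k1 : ℝ} {q : ℝ → ℝ}

theorem rayleighForm_eq {y g : ℝ → ℝ} (h : IsTest y g) (hq : IntegrableOn q (Icc 0 1)) :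
    rayleighForm k0 k1 q y g = (∫ x in Icc 0 1, g x ^ 2) + (∫ x in Icc 0 1, q x * y x ^ 2)
      + k0 ^ 2 * y 0 ^ 2 + k1 ^ 2 * y 1 ^ 2 := by
  rw [rayleighForm, intervalIntegral_zero_one_eq_setIntegral_Icc,
    integral_add h.2.2 (h.integrableOn_mul_sq hq)]

theorem mem_rayleighSet_one :
    k0 ^ 2 + k1 ^ 2 + ∫ x in (0:ℝ)..1, q x ∈ RayleighSet k0 k1 q := by
  refine ⟨fun _ => 1, fun _ => 0, ⟨fun x _ => by simp, ?_, ?_⟩, by simp, ?_⟩ <;> simp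
  ring

theorem le_of_mem_rayleighSet {L : ℝ}
    (hL : ∀ y g, IsTest y g → L * ∫ x in (0:ℝ)..1, y x ^ 2 ≤ rayleighForm k0 k1 q y g) :
    ∀ r ∈ RayleighSet k0 k1 q, L ≤ r := by
  rintro r ⟨y, g, h, hpos, rfl⟩
  exact (le_div_iff₀ hpos).2 (hL y g h)

theorem neg_two_mul_le_rayleighForm (hq : IntegrableOn q (Icc 0 1))
    (hq0 : ∀ᵐ x ∂(volume.restrict (Icc (0:ℝ) 1)), q x ≤ 0)
    (hqi : (∫ x in (0:ℝ)..1, q x) = -1) {y g : ℝ → ℝ} (h : IsTest y g) :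
    -2 * ∫ x in (0:ℝ)..1, y x ^ 2 ≤ rayleighForm k0 k1 q y g := by
  set Y := ∫ x in Icc 0 1, y x ^ 2
  set G := ∫ x in Icc 0 1, g x ^ 2
  have hqy : -(2 * Y + G) ≤ ∫ x in Icc 0 1, q x * y x ^ 2 := by
    have hmono : ∫ x in Icc 0 1, (2 * Y + G) * q x ≤ ∫ x in Icc 0 1, q x * y x ^ 2 := by
      refine integral_mono_ae (hq.const_mul _) (h.integrableOn_mul_sq hq) ?_
      filter_upwards [hq0, ae_restrict_mem measurableSet_Icc] with x hqx hx
      rw [mul_comm]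
      exact mul_le_mul_of_nonpos_left (h.sq_le_two_mul_integral_add hx) hqx
    rwa [integral_const_mul, ← intervalIntegral_zero_one_eq_setIntegral_Icc, hqi,
      mul_neg_one] at hmono
  rw [rayleighForm_eq h hq, intervalIntegral_zero_one_eq_setIntegral_Icc]
  linarith [mul_nonneg (sq_nonneg k0) (sq_nonneg (y 0)),
    mul_nonneg (sq_nonneg k1) (sq_nonneg (y 1))]

theorem lam1_le_of_integral_eq_neg_one (hq : IntegrableOn q (Icc 0 1))
    (hq0 : ∀ᵐ x ∂(volume.restrict (Icc (0:ℝ) 1)), q x ≤ 0)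
    (hqi : (∫ x in (0:ℝ)..1, q x) = -1) :
    lam1 k0 k1 q ≤ k0 ^ 2 + k1 ^ 2 - 1 := by
  have := csInf_le ⟨-2, le_of_mem_rayleighSet fun y g => neg_two_mul_le_rayleighForm hq hq0 hqi⟩
    (mem_rayleighSet_one (k0 := k0) (k1 := k1) (q := q))
  rwa [hqi, ← sub_eq_add_neg] at this

end Rayleigh

noncomputable def spikePotential (k0 k1 m : ℝ) (x : ℝ) : ℝ :=
  k0 ^ 2 + k1 ^ 2 - 1 - (Icc 0 (m ^ 2)⁻¹).indicator (fun _ => m ^ 2 * k0 ^ 2) x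
    - (Icc (1 - (m ^ 2)⁻¹) 1).indicator (fun _ => m ^ 2 * k1 ^ 2) x

namespace spikePotential

variable {k0 k1 m : ℝ}

theorem nonpos (hk : k0 ^ 2 + k1 ^ 2 ≤ 1) (x : ℝ) : spikePotential k0 k1 m x ≤ 0 := by
  have h0 : 0 ≤ (Icc 0 (m ^ 2)⁻¹).indicator (fun _ => m ^ 2 * k0 ^ 2) x :=
    indicator_nonneg (fun _ _ => by positivity) x
  have h1 : 0 ≤ (Icc (1 - (m ^ 2)⁻¹) 1).indicator (fun _ => m ^ 2 * k1 ^ 2) x :=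
    indicator_nonneg (fun _ _ => by positivity) x
  rw [spikePotential]
  linarith

theorem integrableOn : IntegrableOn (spikePotential k0 k1 m) (Icc 0 1) :=
  ((integrableOn_const measure_Icc_lt_top.ne).sub
    ((integrableOn_const measure_Icc_lt_top.ne).indicator measurableSet_Icc)).sub
    ((integrableOn_const measure_Icc_lt_top.ne).indicator measurableSet_Icc)

theorem setIntegral_mul (hm : 1 ≤ m) {f : ℝ → ℝ} (hf : IntegrableOn f (Icc 0 1)) :
    ∫ x in Icc 0 1, spikePotential k0 k1 m x * f x
      = (k0 ^ 2 + k1 ^ 2 - 1) * (∫ x in Icc 0 1, f x)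
        - m ^ 2 * k0 ^ 2 * (∫ x in Icc 0 (m ^ 2)⁻¹, f x)
        - m ^ 2 * k1 ^ 2 * (∫ x in Icc (1 - (m ^ 2)⁻¹) 1, f x) := by
  have hδ1 : (m ^ 2)⁻¹ ≤ 1 := inv_le_one_of_one_le₀ (one_le_pow₀ hm)
  have hδ0 : 0 ≤ (m ^ 2)⁻¹ := by positivity
  have hsplit : (fun x => spikePotential k0 k1 m x * f x) = fun x =>
      (k0 ^ 2 + k1 ^ 2 - 1) * f x - (Icc 0 (m ^ 2)⁻¹).indicator (fun x => m ^ 2 * k0 ^ 2 * f x) x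
        - (Icc (1 - (m ^ 2)⁻¹) 1).indicator (fun x => m ^ 2 * k1 ^ 2 * f x) x := by
    ext x
    simp only [spikePotential, indicator_apply]
    split_ifs <;> ring
  rw [hsplit, integral_sub ((hf.const_mul _).sub' ((hf.const_mul _).indicator measurableSet_Icc))
      ((hf.const_mul _).indicator measurableSet_Icc),
    integral_sub (hf.const_mul _) ((hf.const_mul _).indicator measurableSet_Icc),
    setIntegral_indicator measurableSet_Icc, setIntegral_indicator measurableSet_Icc,
    inter_eq_right.2 (Icc_subset_Icc le_rfl hδ1),
    inter_eq_right.2 (Icc_subset_Icc (by linarith) le_rfl),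
    integral_const_mul, integral_const_mul, integral_const_mul]

theorem intervalIntegral_eq (hm : 1 ≤ m) : ∫ x in (0:ℝ)..1, spikePotential k0 k1 m x = -1 := by
  have := setIntegral_mul (k0 := k0) (k1 := k1) hm (integrableOn_const (C := 1)
    measure_Icc_lt_top.ne)
  simp only [mul_one, setIntegral_const, smul_eq_mul] at this
  rw [intervalIntegral_zero_one_eq_setIntegral_Icc, this, Real.volume_real_Icc_of_le zero_le_one,
    Real.volume_real_Icc_of_le (by positivity), Real.volume_real_Icc_of_le (by simp; positivity)]
  field_simp
  ring

theorem le_lam1 (hk : k0 ^ 2 + k1 ^ 2 ≤ 1) (hm : 2 ≤ m) :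
    k0 ^ 2 + k1 ^ 2 - 1 - 2 * m⁻¹ ≤ lam1 k0 k1 (spikePotential k0 k1 m) := by
  refine le_csInf ⟨_, mem_rayleighSet_one⟩ (le_of_mem_rayleighSet fun y g h => ?_)
  have hm0 : 0 < m := by linarith
  have hδ0 : 0 ≤ (m ^ 2)⁻¹ := by positivity
  have hδ1 : (m ^ 2)⁻¹ ≤ 1 := inv_le_one_of_one_le₀ (by nlinarith)
  have h0 := h.sq_mul_setIntegral_le (Icc_subset_Icc le_rfl hδ1) hm0 (sub_zero _)
    (left_mem_Icc.2 hδ0)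
  have h1 := h.sq_mul_setIntegral_le (Icc_subset_Icc (sub_nonneg.2 hδ1) le_rfl) hm0
    (sub_sub_cancel _ _) (right_mem_Icc.2 (sub_le_self _ hδ0))
  rw [rayleighForm_eq h integrableOn, setIntegral_mul (by linarith) h.integrableOn_sq,
    intervalIntegral_zero_one_eq_setIntegral_Icc]
  set Y := ∫ x in Icc 0 1, y x ^ 2
  set G := ∫ x in Icc 0 1, g x ^ 2
  have hG : 0 ≤ G := setIntegral_nonneg measurableSet_Icc fun _ _ => sq_nonneg _
  have hE : 0 ≤ 2 * (Y + G) * m⁻¹ := by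
    have : 0 ≤ Y := setIntegral_nonneg measurableSet_Icc fun _ _ => sq_nonneg _
    positivity
  have hm' : 2 * m⁻¹ ≤ 1 := by
    rw [← div_eq_mul_inv, div_le_one hm0]
    exact hm
  linarith [mul_le_mul_of_nonneg_left h0 (sq_nonneg k0),
    mul_le_mul_of_nonneg_left h1 (sq_nonneg k1), mul_le_mul_of_nonneg_right hk hE,
    mul_nonneg hG (sub_nonneg.2 hm')]

end spikePotential

theorem stmt2_general (k0 k1 : ℝ)
    (hk : k0 ^ 2 + k1 ^ 2 ≤ 1) :
    sSup { r : ℝ | ∃ q : ℝ → ℝ, IntegrableOn q (Icc (0:ℝ) 1) ∧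
        (∀ᵐ x ∂(volume.restrict (Icc (0:ℝ) 1)), q x ≤ 0) ∧
        (∫ x in (0:ℝ)..1, q x) = -1 ∧ r = lam1 k0 k1 q }
      = k0 ^ 2 + k1 ^ 2 - 1 := by
  have spike_mem (m : ℝ) (hm : 2 ≤ m) : lam1 k0 k1 (spikePotential k0 k1 m) ∈ { r : ℝ |
      ∃ q : ℝ → ℝ, IntegrableOn q (Icc (0:ℝ) 1) ∧
        (∀ᵐ x ∂(volume.restrict (Icc (0:ℝ) 1)), q x ≤ 0) ∧
        (∫ x in (0:ℝ)..1, q x) = -1 ∧ r = lam1 k0 k1 q } :=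
    ⟨_, spikePotential.integrableOn, ae_of_all _ (spikePotential.nonpos hk),
      spikePotential.intervalIntegral_eq (by linarith), rfl⟩
  refine csSup_eq_of_forall_le_of_forall_lt_exists_gt ⟨_, spike_mem 2 le_rfl⟩
    (fun _ ⟨q, hq, hq0, hqi, hr⟩ => hr ▸ lam1_le_of_integral_eq_neg_one hq hq0 hqi)
    fun w hw => ?_
  set ε := k0 ^ 2 + k1 ^ 2 - 1 - w
  have hε : 0 < ε := sub_pos.2 hw
  have hm : 2 ≤ 2 + 2 / ε := le_add_of_nonneg_right (by positivity)
  have hmε : 2 * (2 + 2 / ε)⁻¹ < ε := by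
    rw [← div_eq_mul_inv, div_lt_iff₀ (by positivity), mul_add, mul_div_cancel₀ _ hε.ne']
    linarith
  exact ⟨_, spike_mem _ hm, by linarith [spikePotential.le_lam1 hk hm]⟩

theorem stmt2 (k0 k1 : ℝ) (hk0 : 0 ≤ k0) (hk01 : k0 ≤ k1)
    (hk : k0 ^ 2 + k1 ^ 2 ≤ 1) :
    sSup { r : ℝ | ∃ q : ℝ → ℝ, IntegrableOn q (Icc (0:ℝ) 1) ∧
        (∀ᵐ x ∂(volume.restrict (Icc (0:ℝ) 1)), q x ≤ 0) ∧
        (∫ x in (0:ℝ)..1, q x) = -1 ∧ r = lam1 k0 k1 q }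
      = k0 ^ 2 + k1 ^ 2 - 1 :=
  stmt2_general k0 k1 hk
end

section
/- Let u ∈ L²[0,1] be such that for every nonnegative test function y one has −∫₀¹ u(x) y'(x) dx + y(1) ≥ 0. Then u coincides almost everywhere with a non-decreasing function, and 0 ≤ u ≤ 1 almost everywhere on [0,1]. -/
open MeasureTheory Set Real Filter

/-!
Put `U x = ∫₀ˣ u`. Testing against `y = c + ∫₀ˣ g` with `g` a step function turns the hypothesis
into inequalities for `U`: with `g = ±𝟙_(a,b]` it gives `0 ≤ U b - U a ≤ b - a`, and with `g` the
derivative of a tent function over `(x, y] ∪ (y, z]` it compares the slopes of `U` on adjacent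
intervals, so `U` is convex on `[0,1]`. The right derivative of `U` is then monotone on `(0,1)`
with values in `[0,1]`, and by Lebesgue's differentiation theorem it equals `u` almost everywhere.
-/

def SatisfiesTestIneq (u : ℝ → ℝ) : Prop :=
  ∀ y g : ℝ → ℝ, IsTest y g → (∀ x ∈ Icc (0:ℝ) 1, 0 ≤ y x) →
    0 ≤ -(∫ x in (0:ℝ)..1, u x * g x) + y 1

lemma intervalIntegral_indicator_Ioc (f : ℝ → ℝ) {a b c t : ℝ} (hca : c ≤ a) (hct : c ≤ t) :
    ∫ s in c..t, (Ioc a b).indicator f s = ∫ s in a..max a (min t b), f s := by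
  rw [intervalIntegral.integral_of_le hct, setIntegral_indicator measurableSet_Ioc,
    Ioc_inter_Ioc, max_eq_right hca, intervalIntegral.integral_of_le (le_max_left _ _)]
  congr 2
  ext s
  simp only [mem_Ioc, le_max_iff]
  grind

lemma intervalIntegral_indicator_Ioc_const (p : ℝ) {a b t : ℝ} (ha : 0 ≤ a) (ht : 0 ≤ t) :
    ∫ s in (0:ℝ)..t, (Ioc a b).indicator (fun _ => p) s = (max a (min t b) - a) * p := by
  rw [intervalIntegral_indicator_Ioc _ ha ht, intervalIntegral.integral_const, smul_eq_mul]

lemma intervalIntegral_mul_indicator_Ioc_const (f : ℝ → ℝ) (p : ℝ) {a b : ℝ} (ha : 0 ≤ a)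
    (hab : a ≤ b) (hb : b ≤ 1) :
    ∫ s in (0:ℝ)..1, f s * (Ioc a b).indicator (fun _ => p) s = (∫ s in a..b, f s) * p := by
  simp_rw [← indicator_mul_right]
  rw [intervalIntegral_indicator_Ioc _ ha zero_le_one, min_eq_right hb, max_eq_right hab,
    intervalIntegral.integral_mul_const]

lemma max_min_sub_mem_Icc {a b : ℝ} (hab : a ≤ b) (t : ℝ) :
    max a (min t b) - a ∈ Icc 0 (b - a) :=
  ⟨by simp, by simp [hab]⟩

lemma integrable_indicator_Ioc_const (a b p : ℝ) :
    Integrable ((Ioc a b).indicator fun _ => p) :=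
  (integrable_indicator_iff measurableSet_Ioc).2 (integrableOn_const measure_Ioc_lt_top.ne)

lemma memLp_indicator_Ioc_const (a b p : ℝ) :
    MemLp ((Ioc a b).indicator fun _ => p) 2 (volume.restrict (Icc 0 1)) :=
  (memLp_const p).indicator measurableSet_Ioc

lemma intervalIntegrable_zero_of_integrableOn_Icc {u : ℝ → ℝ} {b x : ℝ}
    (hu : IntegrableOn u (Icc 0 b)) (hx : x ∈ Icc 0 b) : IntervalIntegrable u volume 0 x :=
  (intervalIntegrable_iff_integrableOn_Icc_of_le hx.1).2 (hu.mono_set (Icc_subset_Icc le_rfl hx.2))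

namespace SatisfiesTestIneq

variable {u : ℝ → ℝ}

lemma integral_mul_le (h : SatisfiesTestIneq u) {g : ℝ → ℝ}
    (hg : MemLp g 2 (volume.restrict (Icc 0 1))) (c : ℝ)
    (hpos : ∀ x ∈ Icc (0:ℝ) 1, 0 ≤ c + ∫ t in (0:ℝ)..x, g t) :
    ∫ x in (0:ℝ)..1, u x * g x ≤ c + ∫ x in (0:ℝ)..1, g x := by
  have htest : IsTest (fun x => c + ∫ t in (0:ℝ)..x, g t) g :=
    ⟨fun x _ => by simp, hg.integrable one_le_two, hg.integrable_sq⟩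
  linarith [h _ g htest hpos]

lemma integral_mem_Icc (h : SatisfiesTestIneq u) {a b : ℝ} (ha : 0 ≤ a) (hab : a ≤ b)
    (hb : b ≤ 1) : ∫ x in a..b, u x ∈ Icc 0 (b - a) := by
  have hu (p : ℝ) := intervalIntegral_mul_indicator_Ioc_const u p ha hab hb
  have hg (p : ℝ) := intervalIntegral_indicator_Ioc_const p (b := b) ha zero_le_one
  rw [min_eq_right hb, max_eq_right hab] at hg
  constructor
  · have key := h.integral_mul_le (memLp_indicator_Ioc_const a b (-1)) (b - a) fun t ht => by
      rw [intervalIntegral_indicator_Ioc_const _ ha ht.1]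
      linarith [(max_min_sub_mem_Icc hab t).2]
    rw [hu, hg] at key
    linarith
  · have key := h.integral_mul_le (memLp_indicator_Ioc_const a b 1) 0 fun t ht => by
      rw [intervalIntegral_indicator_Ioc_const _ ha ht.1]
      linarith [(max_min_sub_mem_Icc hab t).1]
    rw [hu, hg] at key
    linarith

lemma integral_div_le_integral_div (h : SatisfiesTestIneq u) (hu : IntegrableOn u (Icc 0 1))
    {x y z : ℝ} (hx : 0 ≤ x) (hxy : x < y) (hyz : y < z) (hz : z ≤ 1) :
    (∫ t in x..y, u t) / (y - x) ≤ (∫ t in y..z, u t) / (z - y) := by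
  set p := (y - x)⁻¹
  set q := (z - y)⁻¹
  have hp : (y - x) * p = 1 := mul_inv_cancel₀ (by linarith)
  have hq : (z - y) * q = 1 := mul_inv_cancel₀ (by linarith)
  have hy : 0 ≤ y := hx.trans hxy.le
  -- `g` is the derivative of the tent function rising on `(x, y]` and falling on `(y, z]`.
  set g : ℝ → ℝ := fun s =>
    (Ioc x y).indicator (fun _ => p) s + (Ioc y z).indicator (fun _ => -q) s
  have hG : ∀ t ∈ Icc (0:ℝ) 1,
      ∫ s in (0:ℝ)..t, g s = (max x (min t y) - x) * p + (max y (min t z) - y) * -q := by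
    intro t ht
    rw [intervalIntegral.integral_add (integrable_indicator_Ioc_const _ _ _).intervalIntegrable
      (integrable_indicator_Ioc_const _ _ _).intervalIntegrable,
      intervalIntegral_indicator_Ioc_const _ hx ht.1,
      intervalIntegral_indicator_Ioc_const _ hy ht.1]
  have hG_nonneg : ∀ t ∈ Icc (0:ℝ) 1, 0 ≤ 0 + ∫ s in (0:ℝ)..t, g s := by
    intro t ht
    rw [zero_add, hG t ht]
    rcases le_total t y with hty | hyt
    · rw [max_eq_left ((min_le_left t z).trans hty)]
      simpa using mul_nonneg (max_min_sub_mem_Icc hxy.le t).1 (inv_nonneg.2 (sub_nonneg.2 hxy.le))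
    · rw [min_eq_right hyt, max_eq_right hxy.le, hp]
      have := mul_le_mul_of_nonneg_right (max_min_sub_mem_Icc hyz.le t).2
        (inv_nonneg.2 (sub_nonneg.2 hyz.le))
      linarith
  have hG_one : ∫ s in (0:ℝ)..1, g s = 0 := by
    rw [hG 1 ⟨zero_le_one, le_rfl⟩, min_eq_right (hyz.le.trans hz), max_eq_right hxy.le,
      min_eq_right hz, max_eq_right hyz.le]
    linarith
  have hmul_int (a b c : ℝ) :
      IntervalIntegrable (fun s => u s * (Ioc a b).indicator (fun _ => c) s) volume 0 1 := by
    simp_rw [← indicator_mul_right]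
    exact (intervalIntegrable_iff_integrableOn_Icc_of_le zero_le_one).2
      ((hu.mul_const c).indicator measurableSet_Ioc)
  have hug : ∫ s in (0:ℝ)..1, u s * g s
      = (∫ t in x..y, u t) * p + (∫ t in y..z, u t) * -q := by
    simp only [g, mul_add]
    rw [intervalIntegral.integral_add (hmul_int _ _ _) (hmul_int _ _ _),
      intervalIntegral_mul_indicator_Ioc_const _ _ hx hxy.le (hyz.le.trans hz),
      intervalIntegral_mul_indicator_Ioc_const _ _ hy hyz.le hz]
  have key := h.integral_mul_le (g := g)
    ((memLp_indicator_Ioc_const x y p).add (memLp_indicator_Ioc_const y z (-q))) 0 hG_nonneg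
  rw [hug, hG_one] at key
  rw [div_eq_mul_inv, div_eq_mul_inv]
  linarith

lemma slope_integral_mem_Icc (h : SatisfiesTestIneq u) (hu : IntegrableOn u (Icc 0 1))
    {x y : ℝ} (hx : x ∈ Icc (0:ℝ) 1) (hy : y ∈ Icc (0:ℝ) 1) (hxy : x < y) :
    slope (fun x => ∫ t in (0:ℝ)..x, u t) x y ∈ Icc 0 1 := by
  rw [slope_def_field, intervalIntegral.integral_interval_sub_left
    (intervalIntegrable_zero_of_integrableOn_Icc hu hy)
    (intervalIntegrable_zero_of_integrableOn_Icc hu hx)]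
  obtain ⟨hI0, hI1⟩ := h.integral_mem_Icc hx.1 hxy.le hy.2
  exact ⟨div_nonneg hI0 (by linarith), (div_le_one (by linarith)).2 hI1⟩

lemma convexOn_integral (h : SatisfiesTestIneq u) (hu : IntegrableOn u (Icc 0 1)) :
    ConvexOn ℝ (Icc 0 1) fun x => ∫ t in (0:ℝ)..x, u t := by
  refine convexOn_of_slope_mono_adjacent (convex_Icc 0 1) fun {x y z} hx hz hxy hyz => ?_
  have hy : y ∈ Icc (0:ℝ) 1 := ⟨hx.1.trans hxy.le, hyz.le.trans hz.2⟩
  have hint {w : ℝ} (hw : w ∈ Icc (0:ℝ) 1) := intervalIntegrable_zero_of_integrableOn_Icc hu hw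
  rw [intervalIntegral.integral_interval_sub_left (hint hy) (hint hx),
    intervalIntegral.integral_interval_sub_left (hint hz) (hint hy)]
  exact h.integral_div_le_integral_div hu hx.1 hxy hyz hz.2

end SatisfiesTestIneq

lemma ConvexOn.rightDeriv_mem_Icc {f : ℝ → ℝ} {a b m M x : ℝ} (hf : ConvexOn ℝ (Icc a b) f)
    (hslope : ∀ y ∈ Icc a b, ∀ z ∈ Icc a b, y < z → slope f y z ∈ Icc m M) (hx : x ∈ Ioo a b) :
    derivWithin f (Ioi x) x ∈ Icc m M := by
  have hint : x ∈ interior (Icc a b) := by rwa [interior_Icc]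
  have hxI : x ∈ Icc a b := Ioo_subset_Icc_self hx
  have ha : a ∈ Icc a b := left_mem_Icc.2 (hx.1.trans hx.2).le
  have hb : b ∈ Icc a b := right_mem_Icc.2 (hx.1.trans hx.2).le
  constructor
  · calc m ≤ slope f a x := (hslope a ha x hxI hx.1).1
      _ ≤ derivWithin f (Iio x) x :=
        hf.slope_le_leftDeriv ha hxI hx.1 (hf.differentiableWithinAt_Iio_of_mem_interior hint)
      _ ≤ derivWithin f (Ioi x) x := hf.leftDeriv_le_rightDeriv_of_mem_interior hint
  · calc derivWithin f (Ioi x) x ≤ slope f x b :=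
        hf.rightDeriv_le_slope hxI hb hx.2 (hf.differentiableWithinAt_Ioi_of_mem_interior hint)
      _ ≤ M := (hslope x hxI b hb hx.2).2

lemma IntervalIntegrable.ae_mem_Ioo_hasDerivAt_integral {u : ℝ → ℝ} {a b : ℝ}
    (hu : IntervalIntegrable u volume a b) :
    ∀ᵐ x ∂volume.restrict (Icc a b),
      x ∈ Ioo a b ∧ HasDerivAt (fun x => ∫ t in a..x, u t) (u x) x := by
  rw [← Measure.restrict_congr_set Ioo_ae_eq_Icc, ae_restrict_iff' measurableSet_Ioo]
  filter_upwards [hu.ae_hasDerivAt_integral] with x hder hx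
  exact ⟨hx, hder (Icc_subset_uIcc (Ioo_subset_Icc_self hx)) a left_mem_uIcc⟩

theorem stmt11_general (u : ℝ → ℝ)
    (hu1 : IntegrableOn u (Icc (0:ℝ) 1))
    (h : ∀ y g : ℝ → ℝ, IsTest y g → (∀ x ∈ Icc (0:ℝ) 1, 0 ≤ y x) →
      0 ≤ -(∫ x in (0:ℝ)..1, u x * g x) + y 1) :
    (∃ v : ℝ → ℝ, MonotoneOn v (Icc (0:ℝ) 1) ∧
      ∀ᵐ x ∂(volume.restrict (Icc (0:ℝ) 1)), u x = v x) ∧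
    (∀ᵐ x ∂(volume.restrict (Icc (0:ℝ) 1)), 0 ≤ u x ∧ u x ≤ 1) := by
  replace h : SatisfiesTestIneq u := h
  set U : ℝ → ℝ := fun x => ∫ t in (0:ℝ)..x, u t
  have hconv : ConvexOn ℝ (Icc 0 1) U := h.convexOn_integral hu1
  have hbound : MapsTo (fun x => derivWithin U (Ioi x) x) (Ioo 0 1) (Icc 0 1) := fun x hx =>
    hconv.rightDeriv_mem_Icc (fun y hy z hz hyz => h.slope_integral_mem_Icc hu1 hy hz hyz) hx
  have hmono : MonotoneOn (fun x => derivWithin U (Ioi x) x) (Ioo 0 1) := by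
    simpa only [interior_Icc] using hconv.monotoneOn_rightDeriv
  obtain ⟨v, hv, hUv⟩ := hmono.exists_monotone_extension
    (bddBelow_Icc.mono hbound.image_subset) (bddAbove_Icc.mono hbound.image_subset)
  have hderiv : ∀ᵐ x ∂volume.restrict (Icc (0:ℝ) 1),
      x ∈ Ioo 0 1 ∧ derivWithin U (Ioi x) x = u x := by
    filter_upwards [(intervalIntegrable_zero_of_integrableOn_Icc hu1
      (right_mem_Icc.2 zero_le_one)).ae_mem_Ioo_hasDerivAt_integral] with x ⟨hx, hUx⟩
    exact ⟨hx, hUx.hasDerivWithinAt.derivWithin (uniqueDiffWithinAt_Ioi x)⟩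
  refine ⟨⟨v, hv.monotoneOn _, ?_⟩, ?_⟩ <;> filter_upwards [hderiv] with x ⟨hx, hUx⟩
  · exact hUx.symm.trans (hUv hx)
  · rw [← hUx]
    exact hbound hx

theorem stmt11 (u : ℝ → ℝ)
    (hu1 : IntegrableOn u (Icc (0:ℝ) 1))
    (hu2 : IntegrableOn (fun x => (u x) ^ 2) (Icc (0:ℝ) 1))
    (h : ∀ y g : ℝ → ℝ, IsTest y g → (∀ x ∈ Icc (0:ℝ) 1, 0 ≤ y x) →
      0 ≤ -(∫ x in (0:ℝ)..1, u x * g x) + y 1) :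
    (∃ v : ℝ → ℝ, MonotoneOn v (Icc (0:ℝ) 1) ∧
      ∀ᵐ x ∂(volume.restrict (Icc (0:ℝ) 1)), u x = v x) ∧
    (∀ᵐ x ∂(volume.restrict (Icc (0:ℝ) 1)), 0 ≤ u x ∧ u x ≤ 1) :=
  stmt11_general u hu1 h
end

section
/- For every ζ ∈ [0,1], setting a := −k₀²/(1 + k₀² ζ) − k₁²/(1 + k₁² (1 − ζ)), one has λ₁(a·δ_ζ) = 0. -/
open MeasureTheory Set Real Filter

/-- First eigenvalue `λ₁(a·δ_ζ)` of the problem with point-mass potential `a·δ_ζ`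
and boundary conditions `y'(0) - k₀² y(0) = 0`, `y'(1) + k₁² y(1) = 0`, defined as the
infimum of the corresponding Rayleigh quotient. -/
noncomputable def lam1Delta (k0 k1 a ζ : ℝ) : ℝ :=
  sInf { r : ℝ | ∃ y g : ℝ → ℝ, IsTest y g ∧ (0 < ∫ x in (0:ℝ)..1, (y x) ^ 2) ∧
    r = ((∫ x in (0:ℝ)..1, (g x) ^ 2) + a * (y ζ) ^ 2
          + k0 ^ 2 * (y 0) ^ 2 + k1 ^ 2 * (y 1) ^ 2) / (∫ x in (0:ℝ)..1, (y x) ^ 2) }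

/-!
Write `a_A(ℓ) = A / (1 + A ℓ)`. For a test function, `y ζ = y 0 + ∫₀^ζ y'` and Cauchy–Schwarz give
`a_A(ζ) y(ζ)² ≤ A y(0)² + ∫₀^ζ y'²`; the same estimate on `[ζ, 1]` from the right end gives
`a_B(1 - ζ) y(ζ)² ≤ B y(1)² + ∫_ζ^1 y'²`. Adding them, every Rayleigh quotient for the
potential `-(a_A(ζ) + a_B(1 - ζ)) δ_ζ` is nonnegative. Both estimates are equalities for the
continuous function that is affine on each side of `ζ` and satisfies the two Robin conditions, so
the infimum `0` is attained.
-/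

lemma sq_integral_le_mul_integral_sq {f : ℝ → ℝ} {a b : ℝ} (hab : a ≤ b)
    (hf : IntervalIntegrable f volume a b)
    (hf2 : IntervalIntegrable (fun x => f x ^ 2) volume a b) :
    (∫ x in a..b, f x) ^ 2 ≤ (b - a) * ∫ x in a..b, f x ^ 2 := by
  obtain rfl | hlt := hab.eq_or_lt
  · simp
  set I := ∫ x in a..b, f x
  set J := ∫ x in a..b, f x ^ 2
  set m := I / (b - a)
  have hm : m * (b - a) = I := div_mul_cancel₀ _ (sub_pos.2 hlt).ne'
  have hvar : ∫ x in a..b, (f x - m) ^ 2 = J - 2 * m * I + (b - a) * m ^ 2 := by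
    have hexpand : ∀ x, (f x - m) ^ 2 = f x ^ 2 - 2 * m * f x + m ^ 2 := fun x => by ring
    simp_rw [hexpand]
    rw [intervalIntegral.integral_add (hf2.sub (hf.const_mul _)) intervalIntegrable_const,
      intervalIntegral.integral_sub hf2 (hf.const_mul _), intervalIntegral.integral_const_mul,
      intervalIntegral.integral_const, smul_eq_mul]
  -- the variance of `f` around its mean `m` is nonnegative
  have hnonneg : 0 ≤ ∫ x in a..b, (f x - m) ^ 2 :=
    intervalIntegral.integral_nonneg hab fun x _ => sq_nonneg _
  nlinarith

/-- `a_A(ℓ)`: the Robin coefficient `A` transported across an interval of length `ℓ`. -/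
noncomputable def robinWeight (A ℓ : ℝ) : ℝ := A / (1 + A * ℓ)

lemma robinWeight_mul_sq_add_le {A ℓ u v W : ℝ} (hA : 0 ≤ A) (hℓ : 0 ≤ ℓ) (hW : 0 ≤ W)
    (hv : v ^ 2 ≤ ℓ * W) :
    robinWeight A ℓ * (u + v) ^ 2 ≤ A * u ^ 2 + W := by
  have hd : 0 < 1 + A * ℓ := by positivity
  rw [robinWeight, div_mul_eq_mul_div, div_le_iff₀ hd]
  obtain rfl | hℓ := hℓ.eq_or_lt
  · have hv0 : v = 0 := by nlinarith [sq_nonneg v]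
    simp [hv0, hW]
  · nlinarith [sq_nonneg (v - A * ℓ * u), mul_nonneg (mul_nonneg hA hℓ.le) (sub_nonneg.2 hv)]

lemma robinWeight_mul_sq_add_integral_le {A a b : ℝ} {g : ℝ → ℝ} (hA : 0 ≤ A) (hab : a ≤ b)
    (hg : IntervalIntegrable g volume a b) (hg2 : IntervalIntegrable (fun x => g x ^ 2) volume a b)
    (u : ℝ) :
    robinWeight A (b - a) * (u + ∫ x in a..b, g x) ^ 2 ≤ A * u ^ 2 + ∫ x in a..b, g x ^ 2 :=
  robinWeight_mul_sq_add_le hA (sub_nonneg.2 hab)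
    (intervalIntegral.integral_nonneg hab fun _ _ => sq_nonneg _)
    (sq_integral_le_mul_integral_sq hab hg hg2)

lemma IsTest.intervalIntegrable {y g : ℝ → ℝ} (hyg : IsTest y g) {a b : ℝ}
    (ha : a ∈ Icc (0:ℝ) 1) (hb : b ∈ Icc (0:ℝ) 1) : IntervalIntegrable g volume a b :=
  (hyg.2.1.mono_set (uIcc_subset_Icc ha hb)).intervalIntegrable

lemma IsTest.intervalIntegrable_sq {y g : ℝ → ℝ} (hyg : IsTest y g) {a b : ℝ}
    (ha : a ∈ Icc (0:ℝ) 1) (hb : b ∈ Icc (0:ℝ) 1) :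
    IntervalIntegrable (fun x => g x ^ 2) volume a b :=
  (hyg.2.2.mono_set (uIcc_subset_Icc ha hb)).intervalIntegrable

lemma IsTest.robin_energy_nonneg {y g : ℝ → ℝ} (hyg : IsTest y g) {A B ζ : ℝ} (hA : 0 ≤ A)
    (hB : 0 ≤ B) (hζ : ζ ∈ Icc (0:ℝ) 1) :
    0 ≤ (∫ x in (0:ℝ)..1, g x ^ 2) + (-robinWeight A ζ - robinWeight B (1 - ζ)) * y ζ ^ 2
      + A * y 0 ^ 2 + B * y 1 ^ 2 := by
  have h0 : (0:ℝ) ∈ Icc (0:ℝ) 1 := left_mem_Icc.2 zero_le_one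
  have h1 : (1:ℝ) ∈ Icc (0:ℝ) 1 := right_mem_Icc.2 zero_le_one
  have hsplit := intervalIntegral.integral_add_adjacent_intervals
    (hyg.intervalIntegrable h0 hζ) (hyg.intervalIntegrable hζ h1)
  have hyζ_left : y ζ = y 0 + ∫ x in (0:ℝ)..ζ, g x := hyg.1 ζ hζ
  have hyζ_right : y ζ = y 1 + ∫ x in ζ..1, -g x := by
    rw [intervalIntegral.integral_neg, hyζ_left, hyg.1 1 h1, ← hsplit]
    ring
  have hleft := robinWeight_mul_sq_add_integral_le hA hζ.1 (hyg.intervalIntegrable h0 hζ)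
    (hyg.intervalIntegrable_sq h0 hζ) (y 0)
  have hright := robinWeight_mul_sq_add_integral_le (g := fun x => -g x) hB hζ.2
    (hyg.intervalIntegrable hζ h1).neg
    (by simpa only [neg_sq] using hyg.intervalIntegrable_sq hζ h1) (y 1)
  rw [← hyζ_left, sub_zero] at hleft
  rw [← hyζ_right] at hright
  simp only [neg_sq] at hright
  rw [← intervalIntegral.integral_add_adjacent_intervals (hyg.intervalIntegrable_sq h0 hζ)
    (hyg.intervalIntegrable_sq hζ h1)]
  linarith

lemma integrableOn_Icc_ite_le (ζ p q a b : ℝ) :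
    IntegrableOn (fun x => if x ≤ ζ then p else q) (Icc a b) :=
  Measure.integrableOn_of_bounded (M := max |p| |q|) measure_Icc_lt_top.ne
    (measurable_const.ite measurableSet_Iic measurable_const).aestronglyMeasurable
    (ae_of_all _ fun x => by split_ifs <;> simp)

lemma integral_ite_le {ζ a b : ℝ} (haζ : a ≤ ζ) (hζb : ζ ≤ b) (p q : ℝ) :
    ∫ x in a..b, (if x ≤ ζ then p else q) = (ζ - a) * p + (b - ζ) * q := by
  rw [← intervalIntegral.integral_add_adjacent_intervals
    ((intervalIntegrable_iff_integrableOn_Icc_of_le haζ).2 (integrableOn_Icc_ite_le ζ p q a ζ))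
    ((intervalIntegrable_iff_integrableOn_Icc_of_le hζb).2 (integrableOn_Icc_ite_le ζ p q ζ b))]
  have hleft : ∫ x in a..ζ, (if x ≤ ζ then p else q) = ∫ _ in a..ζ, p :=
    intervalIntegral.integral_congr fun x hx => if_pos (by rw [uIcc_of_le haζ] at hx; exact hx.2)
  have hright : ∫ x in ζ..b, (if x ≤ ζ then p else q) = ∫ _ in ζ..b, q :=
    intervalIntegral.integral_congr_ae <| ae_of_all _ fun x hx =>
      if_neg (by rw [uIoc_of_le hζb] at hx; exact not_le.2 hx.1)
  simp [hleft, hright]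

lemma isTest_of_hasDerivAt_off_countable {y g : ℝ → ℝ} {s : Set ℝ} (hs : s.Countable)
    (hy : ContinuousOn y (Icc 0 1)) (hyg : ∀ x ∈ Ioo (0:ℝ) 1 \ s, HasDerivAt y (g x) x)
    (hg : IntegrableOn g (Icc 0 1)) (hg2 : IntegrableOn (fun x => g x ^ 2) (Icc 0 1)) :
    IsTest y g := by
  refine ⟨fun x hx => ?_, hg, hg2⟩
  rw [integral_eq_of_hasDerivAt_off_countable_of_le y g hx.1 hs
    (hy.mono (Icc_subset_Icc le_rfl hx.2))
    (fun t ht => hyg t ⟨⟨ht.1.1, ht.1.2.trans_le hx.2⟩, ht.2⟩)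
    ((intervalIntegrable_iff_integrableOn_Icc_of_le hx.1).2
      (hg.mono_set (Icc_subset_Icc le_rfl hx.2)))]
  ring

/-- Up to scaling, the unique function that is affine on `[0, ζ]` and on `[ζ, 1]`, continuous at
`ζ`, and satisfies `y'(0) = A y(0)` and `y'(1) = -B y(1)`: the left piece is the smaller one
exactly on `x ≤ ζ`. -/
noncomputable def groundState (A B ζ x : ℝ) : ℝ :=
  min ((1 + B * (1 - ζ)) * (1 + A * x)) ((1 + A * ζ) * (1 + B * (1 - x)))

noncomputable def groundStateDeriv (A B ζ x : ℝ) : ℝ :=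
  if x ≤ ζ then (1 + B * (1 - ζ)) * A else -((1 + A * ζ) * B)

section groundState

variable {A B ζ : ℝ}

/-- The two affine pieces differ by `(A + B + A B) (ζ - x)`. -/
lemma groundState_of_le (hA : 0 ≤ A) (hB : 0 ≤ B) {x : ℝ} (hx : x ≤ ζ) :
    groundState A B ζ x = (1 + B * (1 - ζ)) * (1 + A * x) :=
  min_eq_left <| by nlinarith [mul_nonneg (by positivity : 0 ≤ A + B + A * B) (sub_nonneg.2 hx)]

lemma groundState_of_ge (hA : 0 ≤ A) (hB : 0 ≤ B) {x : ℝ} (hx : ζ ≤ x) :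
    groundState A B ζ x = (1 + A * ζ) * (1 + B * (1 - x)) :=
  min_eq_right <| by nlinarith [mul_nonneg (by positivity : 0 ≤ A + B + A * B) (sub_nonneg.2 hx)]

lemma continuous_groundState : Continuous (groundState A B ζ) := by
  unfold groundState
  fun_prop

lemma hasDerivAt_groundState (hA : 0 ≤ A) (hB : 0 ≤ B) {x : ℝ} (hx : x ≠ ζ) :
    HasDerivAt (groundState A B ζ) (groundStateDeriv A B ζ x) x := by
  rcases hx.lt_or_gt with hx | hx
  · have hline :
        HasDerivAt (fun t => (1 + B * (1 - ζ)) * (1 + A * t)) ((1 + B * (1 - ζ)) * A) x := by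
      simpa using ((hasDerivAt_id x).const_mul A).const_add 1 |>.const_mul (1 + B * (1 - ζ))
    rw [groundStateDeriv, if_pos hx.le]
    refine hline.congr_of_eventuallyEq ?_
    filter_upwards [Iio_mem_nhds hx] with t ht using groundState_of_le hA hB ht.le
  · have hline : HasDerivAt (fun t => (1 + A * ζ) * (1 + B * (1 - t))) (-((1 + A * ζ) * B)) x := by
      simpa using (((hasDerivAt_id x).const_sub 1).const_mul B).const_add 1 |>.const_mul (1 + A * ζ)
    rw [groundStateDeriv, if_neg (not_le.2 hx)]
    refine hline.congr_of_eventuallyEq ?_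
    filter_upwards [Ioi_mem_nhds hx] with t ht using groundState_of_ge hA hB ht.le

lemma groundStateDeriv_sq (x : ℝ) : groundStateDeriv A B ζ x ^ 2 =
    if x ≤ ζ then ((1 + B * (1 - ζ)) * A) ^ 2 else ((1 + A * ζ) * B) ^ 2 := by
  unfold groundStateDeriv
  split_ifs <;> ring

lemma isTest_groundState (hA : 0 ≤ A) (hB : 0 ≤ B) :
    IsTest (groundState A B ζ) (groundStateDeriv A B ζ) := by
  refine isTest_of_hasDerivAt_off_countable (Set.countable_singleton ζ)
    continuous_groundState.continuousOn
    (fun x hx => hasDerivAt_groundState hA hB hx.2) (integrableOn_Icc_ite_le _ _ _ _ _) ?_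
  simp_rw [groundStateDeriv_sq]
  exact integrableOn_Icc_ite_le _ _ _ _ _

lemma integral_groundState_sq_pos (hA : 0 ≤ A) (hB : 0 ≤ B) (hζ : ζ ∈ Icc (0:ℝ) 1) :
    0 < ∫ x in (0:ℝ)..1, groundState A B ζ x ^ 2 := by
  refine intervalIntegral.intervalIntegral_pos_of_pos_on
    ((continuous_groundState.pow 2).intervalIntegrable 0 1) (fun x hx => ?_) zero_lt_one
  have hleft : 0 < (1 + B * (1 - ζ)) * (1 + A * x) :=
    mul_pos (by nlinarith [hζ.2]) (by nlinarith [hx.1])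
  have hright : 0 < (1 + A * ζ) * (1 + B * (1 - x)) :=
    mul_pos (by nlinarith [hζ.1]) (by nlinarith [hx.2])
  exact pow_pos (lt_min hleft hright) 2

lemma robin_energy_groundState_eq_zero (hA : 0 ≤ A) (hB : 0 ≤ B) (hζ : ζ ∈ Icc (0:ℝ) 1) :
    (∫ x in (0:ℝ)..1, groundStateDeriv A B ζ x ^ 2)
      + (-robinWeight A ζ - robinWeight B (1 - ζ)) * groundState A B ζ ζ ^ 2
      + A * groundState A B ζ 0 ^ 2 + B * groundState A B ζ 1 ^ 2 = 0 := by
  have hα : 0 < 1 + A * ζ := by nlinarith [hζ.1]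
  have hβ : 0 < 1 + B * (1 - ζ) := by nlinarith [hζ.2]
  simp_rw [groundStateDeriv_sq]
  rw [integral_ite_le hζ.1 hζ.2, groundState_of_le hA hB le_rfl,
    groundState_of_le hA hB hζ.1, groundState_of_ge hA hB hζ.2, robinWeight, robinWeight,
    div_eq_mul_inv, div_eq_mul_inv]
  linear_combination (-(A * (1 + A * ζ) * (1 + B * (1 - ζ)) ^ 2)) * mul_inv_cancel₀ hα.ne'
    - B * (1 + A * ζ) ^ 2 * (1 + B * (1 - ζ)) * mul_inv_cancel₀ hβ.ne'

end groundState

theorem stmt14_general (k0 k1 : ℝ)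
    (ζ : ℝ) (hζ : ζ ∈ Icc (0:ℝ) 1) :
    lam1Delta k0 k1
      (-(k0 ^ 2 / (1 + k0 ^ 2 * ζ)) - k1 ^ 2 / (1 + k1 ^ 2 * (1 - ζ))) ζ = 0 := by
  have hA := sq_nonneg k0
  have hB := sq_nonneg k1
  refine IsLeast.csInf_eq ⟨⟨groundState (k0 ^ 2) (k1 ^ 2) ζ, groundStateDeriv (k0 ^ 2) (k1 ^ 2) ζ,
    isTest_groundState hA hB, integral_groundState_sq_pos hA hB hζ, ?_⟩, ?_⟩
  · have hzero := robin_energy_groundState_eq_zero hA hB hζ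
    unfold robinWeight at hzero
    rw [hzero, zero_div]
  · rintro r ⟨y, g, hyg, hpos, rfl⟩
    exact div_nonneg (hyg.robin_energy_nonneg hA hB hζ) hpos.le

theorem stmt14 (k0 k1 : ℝ) (hk0 : 0 ≤ k0) (hk01 : k0 ≤ k1)
    (ζ : ℝ) (hζ : ζ ∈ Icc (0:ℝ) 1) :
    lam1Delta k0 k1
      (-(k0 ^ 2 / (1 + k0 ^ 2 * ζ)) - k1 ^ 2 / (1 + k1 ^ 2 * (1 - ζ))) ζ = 0 :=
  stmt14_general k0 k1 ζ hζ
end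

section
/- Define G(ν, κ, x) := tanh(ν x + ln √((ν + κ)/(ν − κ))) if ν > κ, G(ν, κ, x) := 1 if ν = κ, and G(ν, κ, x) := coth(ν x + ln √((κ + ν)/(κ − ν))) if ν < κ. Then for every μ < 0 and every ζ ∈ [0,1], setting a := −√|μ| · ( G(√|μ|, k₀², ζ) + G(√|μ|, k₁², 1 − ζ) ), one has λ₁(a·δ_ζ) = μ. -/
/-!
Write `ν = √|μ|`. For `κ ≥ 0` the logarithmic derivative `p = u'/u` of
`u(x) = ν cosh νx + κ sinh νx` solves the Riccati equation `p' = ν² - p²` with `p(0) = κ`,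
and `ν G(ν, κ, x) = p(x)`. Whenever `q' = ν² - q²` on `[s, t]`, the identity
`(q y²)' = 2 q y y' + (ν² - q²) y²` gives
`∫ (y' - q y)² = ∫ y'² + ν² ∫ y² - [q y²]ₛᵗ` for every test function `y`.
Taking `q = p₀` on `[0, ζ]` and `q(x) = -p₁(1 - x)` on `[ζ, 1]`, the boundary terms are exactly
the Robin terms `k₀² y(0)² + k₁² y(1)²` and the point mass `a y(ζ)²`, so the Rayleigh numerator
plus `ν² ∫ y²` is a sum of two integrals of squares. Hence `λ₁ ≥ -ν² = μ`, with equality for the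
function glued from `u₀` on `[0, ζ]` and `u₁(1 - ·)` on `[ζ, 1]`, which satisfies `y' = q y`
on both pieces.
-/

open MeasureTheory Set Real Filter

/-- The function `G(ν, κ, x)` from the formula for `F(μ, ζ)` with `μ < 0`. -/
noncomputable def Gfun (ν κ x : ℝ) : ℝ :=
  if κ < ν then Real.tanh (ν * x + Real.log (Real.sqrt ((ν + κ) / (ν - κ))))
  else if ν = κ then 1
  else Real.cosh (ν * x + Real.log (Real.sqrt ((κ + ν) / (κ - ν)))) /
       Real.sinh (ν * x + Real.log (Real.sqrt ((κ + ν) / (κ - ν))))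

open intervalIntegral

section Primitive

variable {s t : ℝ} {y g : ℝ → ℝ}

theorem AbsolutelyContinuousOnInterval.congr {X : Type*} [PseudoMetricSpace X]
    {f f' : ℝ → X} (hf : AbsolutelyContinuousOnInterval f s t) (h : EqOn f f' (uIcc s t)) :
    AbsolutelyContinuousOnInterval f' s t := by
  refine Tendsto.congr' ?_ hf
  filter_upwards [mem_inf_of_right (mem_principal_self _)] with E hE
  refine Finset.sum_congr rfl fun i hi => ?_
  rw [h (hE.1 i hi).1, h (hE.1 i hi).2]

theorem absolutelyContinuousOnInterval_of_eq_add_integral (hst : s ≤ t)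
    (hg : IntervalIntegrable g volume s t)
    (hy : ∀ x ∈ Icc s t, y x = y s + ∫ v in s..x, g v) :
    AbsolutelyContinuousOnInterval y s t := by
  have hprim := hg.absolutelyContinuousOnInterval_intervalIntegral (c := s) left_mem_uIcc
  have hconst : AbsolutelyContinuousOnInterval (fun _ => y s) s t :=
    (LipschitzWith.const (y s)).lipschitzOnWith.absolutelyContinuousOnInterval
  refine (hconst.add hprim).congr fun x hx => ?_
  rw [uIcc_of_le hst] at hx
  exact (hy x hx).symm

theorem ae_hasDerivAt_of_eq_add_integral (hst : s ≤ t)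
    (hg : IntervalIntegrable g volume s t)
    (hy : ∀ x ∈ Icc s t, y x = y s + ∫ v in s..x, g v) :
    ∀ᵐ x, x ∈ Ioo s t → HasDerivAt y (g x) x := by
  filter_upwards [hg.ae_hasDerivAt_integral] with x hx hxI
  have hxI' : x ∈ uIcc s t := by rw [uIcc_of_le hst]; exact Ioo_subset_Icc_self hxI
  refine ((hx hxI' s left_mem_uIcc).const_add (y s)).congr_of_eventuallyEq ?_
  filter_upwards [Ioo_mem_nhds hxI.1 hxI.2] with v hv
  exact hy v (Ioo_subset_Icc_self hv)

theorem integral_sub_mul_sq_eq_of_riccati {q : ℝ → ℝ} {c : ℝ} (hst : s ≤ t)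
    (hg : IntervalIntegrable g volume s t)
    (hg2 : IntervalIntegrable (fun x => g x ^ 2) volume s t)
    (hy : ∀ x ∈ Icc s t, y x = y s + ∫ v in s..x, g v)
    (hq : ∀ x ∈ Icc s t, HasDerivAt q (c - q x ^ 2) x) :
    ∫ x in s..t, (g x - q x * y x) ^ 2
      = (∫ x in s..t, g x ^ 2) + c * (∫ x in s..t, y x ^ 2)
        - (q t * y t ^ 2 - q s * y s ^ 2) := by
  have hyAC := absolutelyContinuousOnInterval_of_eq_add_integral hst hg hy
  have hqc : ContinuousOn q (Icc s t) := fun x hx => (hq x hx).continuousAt.continuousWithinAt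
  have hq' : IntervalIntegrable (fun x => c - q x ^ 2) volume s t :=
    (continuousOn_const.sub (hqc.pow 2)).intervalIntegrable_of_Icc hst
  have hqAC : AbsolutelyContinuousOnInterval q s t := by
    refine absolutelyContinuousOnInterval_of_eq_add_integral hst hq' fun x hx => ?_
    rw [integral_eq_sub_of_hasDerivAt (fun v hv => hq v ?_)
      (hq'.mono_set (uIcc_subset_uIcc_left (by rwa [uIcc_of_le hst]))), add_sub_cancel]
    rw [uIcc_of_le hx.1] at hv
    exact ⟨hv.1, hv.2.trans hx.2⟩
  have hFAC := hqAC.fun_mul (hyAC.fun_mul hyAC)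
  have hy2 : IntervalIntegrable (fun x => y x ^ 2) volume s t :=
    (hyAC.continuousOn.pow 2).intervalIntegrable
  have hderiv : ∀ᵐ x, x ∈ uIoc s t →
      (g x - q x * y x) ^ 2 = g x ^ 2 + c * y x ^ 2 - deriv (fun x => q x * (y x * y x)) x := by
    filter_upwards [ae_hasDerivAt_of_eq_add_integral hst hg hy, Measure.ae_ne volume t]
      with x hdy hxt hx
    rw [uIoc_of_le hst] at hx
    have hxI : x ∈ Ioo s t := ⟨hx.1, lt_of_le_of_ne hx.2 hxt⟩
    rw [((hq x (Ioo_subset_Icc_self hxI)).fun_mul ((hdy hxI).fun_mul (hdy hxI))).deriv]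
    ring
  rw [integral_congr_ae hderiv, integral_sub (hg2.add (hy2.const_mul c))
    hFAC.intervalIntegrable_deriv, integral_add hg2 (hy2.const_mul c),
    intervalIntegral.integral_const_mul, hFAC.integral_deriv_eq_sub]
  ring

end Primitive

section Robin

variable {ν κ x : ℝ}

/-- The solution of `u'' = ν² u` with `u(0) = ν` and the Robin condition `u'(0) = κ u(0)`. -/
noncomputable def robinSol (ν κ x : ℝ) : ℝ := ν * cosh (ν * x) + κ * sinh (ν * x)

noncomputable def robinSolDeriv (ν κ x : ℝ) : ℝ := ν * (ν * sinh (ν * x) + κ * cosh (ν * x))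

noncomputable def robinLogDeriv (ν κ x : ℝ) : ℝ := robinSolDeriv ν κ x / robinSol ν κ x

theorem robinSol_pos (hν : 0 < ν) (hκ : 0 ≤ κ) (hx : 0 ≤ x) : 0 < robinSol ν κ x :=
  add_pos_of_pos_of_nonneg (mul_pos hν (cosh_pos _))
    (mul_nonneg hκ (sinh_nonneg_iff.mpr (mul_nonneg hν.le hx)))

theorem continuous_robinSolDeriv : Continuous (robinSolDeriv ν κ) := by
  unfold robinSolDeriv; fun_prop

theorem hasDerivAt_robinSol (ν κ x : ℝ) :
    HasDerivAt (robinSol ν κ) (robinSolDeriv ν κ x) x := by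
  have h := (hasDerivAt_id x).const_mul ν
  unfold robinSol robinSolDeriv
  exact ((h.cosh.const_mul ν).add (h.sinh.const_mul κ)).congr_deriv (by simp only [id]; ring)

theorem hasDerivAt_robinSolDeriv (ν κ x : ℝ) :
    HasDerivAt (robinSolDeriv ν κ) (ν ^ 2 * robinSol ν κ x) x := by
  have h := (hasDerivAt_id x).const_mul ν
  unfold robinSol robinSolDeriv
  exact (((h.sinh.const_mul ν).add (h.cosh.const_mul κ)).const_mul ν).congr_deriv
    (by simp only [id]; ring)

theorem robinLogDeriv_zero (hν : ν ≠ 0) : robinLogDeriv ν κ 0 = κ := by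
  simp [robinLogDeriv, robinSolDeriv, robinSol, hν]

theorem hasDerivAt_robinLogDeriv (hν : 0 < ν) (hκ : 0 ≤ κ) (hx : 0 ≤ x) :
    HasDerivAt (robinLogDeriv ν κ) (ν ^ 2 - robinLogDeriv ν κ x ^ 2) x := by
  have hD := (robinSol_pos hν hκ hx).ne'
  refine ((hasDerivAt_robinSolDeriv ν κ x).div (hasDerivAt_robinSol ν κ x) hD).congr_deriv ?_
  rw [robinLogDeriv]
  field_simp

theorem cosh_log_sqrt {a b : ℝ} (hba : b < a) (hab : 0 < a + b) :
    cosh (log √((a + b) / (a - b))) = a / ((a - b) * √((a + b) / (a - b))) := by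
  have hr : 0 < (a + b) / (a - b) := div_pos hab (sub_pos.mpr hba)
  have hs := sqrt_pos.mpr hr
  have hab' : a - b ≠ 0 := (sub_pos.mpr hba).ne'
  rw [cosh_log hs]
  field_simp
  rw [sq_sqrt hr.le]
  field_simp
  ring

theorem sinh_log_sqrt {a b : ℝ} (hba : b < a) (hab : 0 < a + b) :
    sinh (log √((a + b) / (a - b))) = b / ((a - b) * √((a + b) / (a - b))) := by
  have hr : 0 < (a + b) / (a - b) := div_pos hab (sub_pos.mpr hba)
  have hs := sqrt_pos.mpr hr
  have hab' : a - b ≠ 0 := (sub_pos.mpr hba).ne'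
  rw [sinh_log hs]
  field_simp
  rw [sq_sqrt hr.le]
  field_simp
  ring

theorem mul_Gfun_eq_robinLogDeriv (hν : 0 < ν) (hκ : 0 ≤ κ) (hx : 0 ≤ x) :
    ν * Gfun ν κ x = robinLogDeriv ν κ x := by
  have hD := (robinSol_pos hν hκ hx).ne'
  unfold robinSol at hD
  rcases lt_trichotomy κ ν with hκν | rfl | hνκ
  · have hl : (ν - κ) * √((ν + κ) / (ν - κ)) ≠ 0 :=
      mul_ne_zero (sub_pos.mpr hκν).ne' (sqrt_pos.mpr (div_pos (by linarith) (by linarith))).ne'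
    rw [Gfun, if_pos hκν, tanh_eq_sinh_div_cosh, sinh_add, cosh_add,
      cosh_log_sqrt hκν (by linarith), sinh_log_sqrt hκν (by linarith)]
    simp only [robinLogDeriv, robinSolDeriv, robinSol]
    field_simp
  · rw [Gfun, if_neg (lt_irrefl κ), if_pos rfl, robinLogDeriv, robinSolDeriv, robinSol]
    field_simp
    ring
  · have hl : (κ - ν) * √((κ + ν) / (κ - ν)) ≠ 0 :=
      mul_ne_zero (sub_pos.mpr hνκ).ne' (sqrt_pos.mpr (div_pos (by linarith) (by linarith))).ne'
    rw [Gfun, if_neg (not_lt.mpr hνκ.le), if_neg hνκ.ne, cosh_add, sinh_add,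
      cosh_log_sqrt hνκ (by linarith), sinh_log_sqrt hνκ (by linarith)]
    simp only [robinLogDeriv, robinSolDeriv, robinSol]
    field_simp
    ring

end Robin

section Gluing

variable {fL fR gL gR : ℝ → ℝ} {ζ : ℝ}

theorem Continuous.intervalIntegrable_ite_le (hgL : Continuous gL) (hgR : Continuous gR)
    (ζ a b : ℝ) : IntervalIntegrable (fun x => if x ≤ ζ then gL x else gR x) volume a b := by
  refine ((hgL.abs.add hgR.abs).intervalIntegrable a b).mono_fun
    (Measurable.ite measurableSet_Iic hgL.measurable hgR.measurable).aestronglyMeasurable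
    (Eventually.of_forall fun x => ?_)
  dsimp only [Pi.add_apply]
  rw [norm_eq_abs, norm_eq_abs, abs_of_nonneg (a := |gL x| + |gR x|) (by positivity)]
  split_ifs <;> simp

theorem ite_le_eq_add_integral (hL : ∀ x, HasDerivAt fL (gL x) x)
    (hR : ∀ x, HasDerivAt fR (gR x) x) (hgL : Continuous gL) (hgR : Continuous gR)
    (hζ : fL ζ = fR ζ) (a b : ℝ) :
    (if b ≤ ζ then fL b else fR b)
      = (if a ≤ ζ then fL a else fR a) + ∫ x in a..b, if x ≤ ζ then gL x else gR x := by
  have hcont : Continuous fun x => if x ≤ ζ then fL x else fR x :=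
    (continuous_iff_continuousAt.mpr fun x => (hL x).continuousAt).if_le
      (continuous_iff_continuousAt.mpr fun x => (hR x).continuousAt) continuous_id
      continuous_const fun x hx => hx ▸ hζ
  rw [integral_eq_of_hasDerivAt_off_countable _ _ (countable_singleton ζ) hcont.continuousOn
    (fun x hx => ?_) (hgL.intervalIntegrable_ite_le hgR ζ a b)]
  · ring
  rcases lt_or_gt_of_ne hx.2 with hxζ | hxζ
  · rw [if_pos hxζ.le]
    refine (hL x).congr_of_eventuallyEq ?_
    filter_upwards [Iio_mem_nhds hxζ] with v hv
    exact if_pos (le_of_lt hv)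
  · rw [if_neg (not_le.mpr hxζ)]
    refine (hR x).congr_of_eventuallyEq ?_
    filter_upwards [Ioi_mem_nhds hxζ] with v hv
    exact if_neg (not_le.mpr hv)

end Gluing

noncomputable def deltaQuadForm (k0 k1 a ζ : ℝ) (y g : ℝ → ℝ) : ℝ :=
  (∫ x in (0:ℝ)..1, (g x) ^ 2) + a * (y ζ) ^ 2 + k0 ^ 2 * (y 0) ^ 2 + k1 ^ 2 * (y 1) ^ 2

section TestFunction

variable {y g : ℝ → ℝ} {k0 k1 ν ζ : ℝ}

theorem IsTest.eq_add_integral (hT : IsTest y g) {s : ℝ} (hs : s ∈ Icc (0:ℝ) 1) :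
    ∀ x ∈ Icc s 1, y x = y s + ∫ v in s..x, g v := by
  intro x hx
  have hgI : IntervalIntegrable g volume 0 1 :=
    (intervalIntegrable_iff_integrableOn_Icc_of_le zero_le_one).mpr hT.2.1
  have hx' : x ∈ Icc (0:ℝ) 1 := ⟨hs.1.trans hx.1, hx.2⟩
  have h0 : (0:ℝ) ∈ uIcc (0:ℝ) 1 := left_mem_uIcc
  rw [hT.1 x hx', hT.1 s hs, add_assoc, integral_add_adjacent_intervals
    (hgI.mono_set (uIcc_subset_uIcc h0 (Icc_subset_uIcc hs)))
    (hgI.mono_set (uIcc_subset_uIcc (Icc_subset_uIcc hs) (Icc_subset_uIcc hx')))]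

theorem deltaQuadForm_add_eq (hν : 0 < ν) (hT : IsTest y g) (hζ : ζ ∈ Icc (0:ℝ) 1) :
    deltaQuadForm k0 k1 (-(robinLogDeriv ν (k0 ^ 2) ζ + robinLogDeriv ν (k1 ^ 2) (1 - ζ))) ζ y g
        + ν ^ 2 * ∫ x in (0:ℝ)..1, y x ^ 2
      = (∫ x in (0:ℝ)..ζ, (g x - robinLogDeriv ν (k0 ^ 2) x * y x) ^ 2)
        + ∫ x in ζ..1, (g x + robinLogDeriv ν (k1 ^ 2) (1 - x) * y x) ^ 2 := by
  have hgI : IntervalIntegrable g volume 0 1 :=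
    (intervalIntegrable_iff_integrableOn_Icc_of_le zero_le_one).mpr hT.2.1
  have hg2I : IntervalIntegrable (fun x => g x ^ 2) volume 0 1 :=
    (intervalIntegrable_iff_integrableOn_Icc_of_le zero_le_one).mpr hT.2.2
  have hy2I : IntervalIntegrable (fun x => y x ^ 2) volume 0 1 :=
    ((absolutelyContinuousOnInterval_of_eq_add_integral zero_le_one hgI hT.1).continuousOn.pow
      2).intervalIntegrable
  have hζ' : ζ ∈ uIcc (0:ℝ) 1 := by rwa [uIcc_of_le zero_le_one]
  have hL : uIcc 0 ζ ⊆ uIcc (0:ℝ) 1 := uIcc_subset_uIcc left_mem_uIcc hζ'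
  have hR : uIcc ζ 1 ⊆ uIcc (0:ℝ) 1 := uIcc_subset_uIcc hζ' right_mem_uIcc
  have left := integral_sub_mul_sq_eq_of_riccati hζ.1 (hgI.mono_set hL) (hg2I.mono_set hL)
    (fun x hx => hT.1 x ⟨hx.1, hx.2.trans hζ.2⟩)
    (fun x hx => hasDerivAt_robinLogDeriv hν (sq_nonneg k0) hx.1)
  have right := integral_sub_mul_sq_eq_of_riccati (c := ν ^ 2)
    (q := fun x => -robinLogDeriv ν (k1 ^ 2) (1 - x))
    hζ.2 (hgI.mono_set hR) (hg2I.mono_set hR) (hT.eq_add_integral hζ) fun x hx => by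
      have := (hasDerivAt_robinLogDeriv hν (sq_nonneg k1) (sub_nonneg.mpr hx.2)).comp x
        ((hasDerivAt_id x).const_sub 1)
      exact this.neg.congr_deriv (by ring)
  simp only [neg_mul, sub_neg_eq_add, sub_self, robinLogDeriv_zero hν.ne'] at left right
  rw [deltaQuadForm, ← integral_add_adjacent_intervals (hg2I.mono_set hL) (hg2I.mono_set hR),
    ← integral_add_adjacent_intervals (hy2I.mono_set hL) (hy2I.mono_set hR), left, right]
  ring

theorem neg_sq_mul_le_deltaQuadForm (hν : 0 < ν) (hT : IsTest y g) (hζ : ζ ∈ Icc (0:ℝ) 1) :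
    -ν ^ 2 * ∫ x in (0:ℝ)..1, y x ^ 2
      ≤ deltaQuadForm k0 k1 (-(robinLogDeriv ν (k0 ^ 2) ζ + robinLogDeriv ν (k1 ^ 2) (1 - ζ)))
          ζ y g := by
  have hsum := deltaQuadForm_add_eq (k0 := k0) (k1 := k1) hν hT hζ
  have hL : 0 ≤ ∫ x in (0:ℝ)..ζ, (g x - robinLogDeriv ν (k0 ^ 2) x * y x) ^ 2 :=
    integral_nonneg hζ.1 fun x _ => sq_nonneg _
  have hR :
      0 ≤ ∫ x in ζ..1, (g x + robinLogDeriv ν (k1 ^ 2) (1 - x) * y x) ^ 2 :=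
    integral_nonneg hζ.2 fun x _ => sq_nonneg _
  linarith

end TestFunction

theorem exists_deltaQuadForm_eq {k0 k1 ν ζ : ℝ} (hν : 0 < ν) (hζ : ζ ∈ Icc (0:ℝ) 1) :
    ∃ y g, IsTest y g ∧ 0 < ∫ x in (0:ℝ)..1, y x ^ 2 ∧
      deltaQuadForm k0 k1 (-(robinLogDeriv ν (k0 ^ 2) ζ + robinLogDeriv ν (k1 ^ 2) (1 - ζ))) ζ y g
        = -ν ^ 2 * ∫ x in (0:ℝ)..1, y x ^ 2 := by
  set cL := robinSol ν (k0 ^ 2) ζ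
  set cR := robinSol ν (k1 ^ 2) (1 - ζ)
  have hL (x : ℝ) : HasDerivAt (fun x => cR * robinSol ν (k0 ^ 2) x)
      (cR * robinSolDeriv ν (k0 ^ 2) x) x :=
    (hasDerivAt_robinSol ν _ x).const_mul cR
  have hR (x : ℝ) : HasDerivAt (fun x => cL * robinSol ν (k1 ^ 2) (1 - x))
      (-(cL * robinSolDeriv ν (k1 ^ 2) (1 - x))) x :=
    (((hasDerivAt_robinSol ν _ (1 - x)).comp x ((hasDerivAt_id x).const_sub 1)).const_mul
      cL).congr_deriv (by ring)
  have hgL : Continuous fun x => cR * robinSolDeriv ν (k0 ^ 2) x :=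
    continuous_const.mul continuous_robinSolDeriv
  have hgR : Continuous fun x => -(cL * robinSolDeriv ν (k1 ^ 2) (1 - x)) :=
    (continuous_const.mul (continuous_robinSolDeriv.comp (continuous_sub_left 1))).neg
  have hrep := ite_le_eq_add_integral hL hR hgL hgR (mul_comm _ _)
  set y := fun x => if x ≤ ζ then cR * robinSol ν (k0 ^ 2) x
    else cL * robinSol ν (k1 ^ 2) (1 - x)
  set g := fun x => if x ≤ ζ then cR * robinSolDeriv ν (k0 ^ 2) x
    else -(cL * robinSolDeriv ν (k1 ^ 2) (1 - x))
  have hg2 : (fun x => g x ^ 2) = fun x => if x ≤ ζ then (cR * robinSolDeriv ν (k0 ^ 2) x) ^ 2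
      else (-(cL * robinSolDeriv ν (k1 ^ 2) (1 - x))) ^ 2 :=
    funext fun x => apply_ite (· ^ 2) _ _ _
  have hT : IsTest y g := by
    refine ⟨fun x _ => hrep 0 x, ?_, ?_⟩
    · exact (intervalIntegrable_iff_integrableOn_Icc_of_le zero_le_one).mp
        (hgL.intervalIntegrable_ite_le hgR ζ 0 1)
    · rw [hg2]
      exact (intervalIntegrable_iff_integrableOn_Icc_of_le zero_le_one).mp
        ((hgL.pow 2).intervalIntegrable_ite_le (hgR.pow 2) ζ 0 1)
  have hcL : 0 < cL := robinSol_pos hν (sq_nonneg k0) hζ.1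
  have hcR : 0 < cR := robinSol_pos hν (sq_nonneg k1) (sub_nonneg.mpr hζ.2)
  have hpos : ∀ x ∈ Icc (0:ℝ) 1, 0 < y x := by
    intro x hx
    simp only [y]
    split_ifs
    · exact mul_pos hcR (robinSol_pos hν (sq_nonneg k0) hx.1)
    · exact mul_pos hcL (robinSol_pos hν (sq_nonneg k1) (sub_nonneg.mpr hx.2))
  have hyc : ContinuousOn y (Icc 0 1) :=
    (absolutelyContinuousOnInterval_of_eq_add_integral zero_le_one
      ((intervalIntegrable_iff_integrableOn_Icc_of_le zero_le_one).mpr hT.2.1) hT.1).continuousOn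
      |>.mono (by rw [uIcc_of_le zero_le_one])
  have hden : 0 < ∫ x in (0:ℝ)..1, y x ^ 2 :=
    intervalIntegral_pos_of_pos_on ((hyc.pow 2).intervalIntegrable_of_Icc zero_le_one)
      (fun x hx => pow_pos (hpos x (Ioo_subset_Icc_self hx)) 2) zero_lt_one
  refine ⟨y, g, hT, hden, ?_⟩
  have hleft : ∫ x in (0:ℝ)..ζ, (g x - robinLogDeriv ν (k0 ^ 2) x * y x) ^ 2 = 0 := by
    refine integral_zero_ae (Eventually.of_forall fun x hx => ?_)
    rw [uIoc_of_le hζ.1] at hx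
    have hD := (robinSol_pos hν (sq_nonneg k0) hx.1.le).ne'
    simp only [g, y, if_pos hx.2, robinLogDeriv]
    field_simp
    ring
  have hright : ∫ x in ζ..1, (g x + robinLogDeriv ν (k1 ^ 2) (1 - x) * y x) ^ 2 = 0 := by
    refine integral_zero_ae (Eventually.of_forall fun x hx => ?_)
    rw [uIoc_of_le hζ.2] at hx
    have hD := (robinSol_pos hν (sq_nonneg k1) (sub_nonneg.mpr hx.2)).ne'
    simp only [g, y, if_neg (not_le.mpr hx.1), robinLogDeriv]
    field_simp
    ring
  linarith [deltaQuadForm_add_eq (k0 := k0) (k1 := k1) hν hT hζ]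

theorem stmt15_general (k0 k1 : ℝ)
    (μ ζ : ℝ) (hμ : μ < 0) (hζ : ζ ∈ Icc (0:ℝ) 1) :
    lam1Delta k0 k1
      (-(Real.sqrt |μ|) * (Gfun (Real.sqrt |μ|) (k0 ^ 2) ζ
        + Gfun (Real.sqrt |μ|) (k1 ^ 2) (1 - ζ))) ζ = μ := by
  set ν := √|μ|
  have hν : 0 < ν := sqrt_pos.mpr (abs_pos.mpr hμ.ne)
  have hμν : μ = -ν ^ 2 := by rw [sq_sqrt (abs_nonneg μ), abs_of_neg hμ, neg_neg]
  rw [neg_mul, mul_add, mul_Gfun_eq_robinLogDeriv hν (sq_nonneg k0) hζ.1,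
    mul_Gfun_eq_robinLogDeriv hν (sq_nonneg k1) (sub_nonneg.mpr hζ.2), hμν]
  refine IsLeast.csInf_eq ⟨?_, ?_⟩
  · obtain ⟨y, g, hT, hpos, heq⟩ := exists_deltaQuadForm_eq (k0 := k0) (k1 := k1) hν hζ
    exact ⟨y, g, hT, hpos, by rw [← deltaQuadForm, heq, mul_div_cancel_right₀ _ hpos.ne']⟩
  · rintro r ⟨y, g, hT, hpos, rfl⟩
    exact (le_div_iff₀ hpos).mpr (neg_sq_mul_le_deltaQuadForm hν hT hζ)

theorem stmt15 (k0 k1 : ℝ) (hk0 : 0 ≤ k0) (hk01 : k0 ≤ k1)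
    (μ ζ : ℝ) (hμ : μ < 0) (hζ : ζ ∈ Icc (0:ℝ) 1) :
    lam1Delta k0 k1
      (-(Real.sqrt |μ|) * (Gfun (Real.sqrt |μ|) (k0 ^ 2) ζ
        + Gfun (Real.sqrt |μ|) (k1 ^ 2) (1 - ζ))) ζ = μ :=
  stmt15_general k0 k1 μ ζ hμ hζ
end

section
/- For ζ ∈ [0,1) define μ₁(ζ) := inf{ (∫_ζ^1 y'(x)² dx + k₁² y(1)² − y(ζ)²/2) / ∫_ζ^1 y(x)² dx : y absolutely continuous on [ζ,1] with y' ∈ L²[ζ,1], y not a.e. zero } (the first eigenvalue of −y'' = λ y on [ζ,1] with boundary conditions 2y'(ζ) + y(ζ) = 0 and y'(1) + k₁² y(1) = 0). Then: if k₁² = 1/2 then μ₁(ζ) = −1/4 for all ζ ∈ [0,1); if k₁² > 1/2 then μ₁ is strictly increasing on [0,1), μ₁(ζ) → +∞ as ζ → 1⁻, and μ₁(0) > −1/4; and if k₁² < 1/2 then μ₁(ζ) < −1/4 for all ζ ∈ [0,1). -/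
open MeasureTheory Set Real Filter

/-- A test function on `[a,b]`: `y` is absolutely continuous on `[a,b]` with
derivative `g` belonging to `L²[a,b]`. -/
def IsTestOn (a b : ℝ) (y g : ℝ → ℝ) : Prop :=
  (∀ x ∈ Icc a b, y x = y a + ∫ t in a..x, g t) ∧
  IntegrableOn g (Icc a b) ∧
  IntegrableOn (fun x => (g x) ^ 2) (Icc a b)

/-- `μ₁(ζ)`: the first eigenvalue of `-y'' = λ y` on `[ζ,1]` with boundary conditions
`2 y'(ζ) + y(ζ) = 0`, `y'(1) + k₁² y(1) = 0`, defined via the Rayleigh quotient. -/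
noncomputable def mu1 (k1 ζ : ℝ) : ℝ :=
  sInf { r : ℝ | ∃ y g : ℝ → ℝ, IsTestOn ζ 1 y g ∧ (0 < ∫ x in ζ..(1:ℝ), (y x) ^ 2) ∧
    r = ((∫ x in ζ..(1:ℝ), (g x) ^ 2) + k1 ^ 2 * (y 1) ^ 2 - (y ζ) ^ 2 / 2) /
        (∫ x in ζ..(1:ℝ), (y x) ^ 2) }

/-!
Let `p` solve the Riccati equation `p' + p² = -λ` on `[ζ, 1]` with `p ζ = -1/2` and
`p 1 = -k₁²`. Writing `y' = (y' - p y) + p y` and integrating `(p y²)'` by parts, the numerator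
of the Rayleigh quotient minus `λ ∫ y²` becomes `∫ (y' - p y)² + (p 1 + k₁²) y(1)² -
(p ζ + 1/2) y(ζ)²`, which is `≥ 0` and vanishes for the ground state `y = exp ∫ p`; so
`μ₁(ζ) = λ`. When `k₁² ≤ 1/2` the constant `p = -1/2`, `λ = -1/4` is compared directly.
When `k₁² > 1/2`, `q = -p` solves `q' = λ + q²` from `1/2` to `k₁²` in time `1 - ζ`, that is
`∫_{1/2}^{k₁²} dv / (λ + v²) = 1 - ζ`; this travel time decreases in `λ > -1/4` from `+∞` to
`0`, which gives the monotonicity of `μ₁` and its blow-up as `ζ → 1`.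
-/

open Topology

theorem AbsolutelyContinuousOnInterval.congr_s17 {f g : ℝ → ℝ} {a b : ℝ}
    (hf : AbsolutelyContinuousOnInterval f a b) (hfg : EqOn f g (uIcc a b)) :
    AbsolutelyContinuousOnInterval g a b := by
  refine hf.congr' (mem_inf_of_right (mem_principal.2 fun E hE => ?_))
  exact Finset.sum_congr rfl fun i hi => by rw [hfg (hE.1 i hi).1, hfg (hE.1 i hi).2]

namespace IsTestOn

variable {a b : ℝ} {y g p p' : ℝ → ℝ}

theorem intervalIntegrable (hab : a ≤ b) (hy : IsTestOn a b y g) :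
    IntervalIntegrable g volume a b :=
  (intervalIntegrable_iff_integrableOn_Icc_of_le hab).2 hy.2.1

theorem intervalIntegrable_sq (hab : a ≤ b) (hy : IsTestOn a b y g) :
    IntervalIntegrable (fun x => g x ^ 2) volume a b :=
  (intervalIntegrable_iff_integrableOn_Icc_of_le hab).2 hy.2.2

theorem absolutelyContinuousOnInterval (hab : a ≤ b) (hy : IsTestOn a b y g) :
    AbsolutelyContinuousOnInterval y a b := by
  have hprim := (hy.intervalIntegrable hab).absolutelyContinuousOnInterval_intervalIntegral
    (c := a) left_mem_uIcc
  refine ((LipschitzWith.const (y a)).lipschitzOnWith.absolutelyContinuousOnInterval.add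
    hprim).congr_s17 fun x hx => ?_
  rw [uIcc_of_le hab] at hx
  exact (hy.1 x hx).symm

theorem continuousOn (hab : a ≤ b) (hy : IsTestOn a b y g) : ContinuousOn y (uIcc a b) :=
  (hy.absolutelyContinuousOnInterval hab).continuousOn

theorem ae_hasDerivAt (hab : a ≤ b) (hy : IsTestOn a b y g) :
    ∀ᵐ x, x ∈ Ioo a b → HasDerivAt y (g x) x := by
  filter_upwards [(hy.intervalIntegrable hab).ae_hasDerivAt_integral] with x hx hxab
  have hmem : x ∈ uIcc a b := by rw [uIcc_of_le hab]; exact Ioo_subset_Icc_self hxab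
  refine ((hx hmem a left_mem_uIcc).const_add (y a)).congr_of_eventuallyEq ?_
  filter_upwards [isOpen_Ioo.mem_nhds hxab] with t ht
  exact hy.1 t (Ioo_subset_Icc_self ht)

theorem of_hasDerivAt (hy : ∀ x ∈ Icc a b, HasDerivAt y (g x) x)
    (hg : ContinuousOn g (Icc a b)) : IsTestOn a b y g := by
  refine ⟨fun x hx => ?_, hg.integrableOn_Icc, (hg.pow 2).integrableOn_Icc⟩
  rw [intervalIntegral.integral_eq_sub_of_hasDerivAt (fun t ht => hy t ?_)
    ((hg.mono (Icc_subset_Icc_right hx.2)).intervalIntegrable_of_Icc hx.1)]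
  · ring
  · rw [uIcc_of_le hx.1] at ht
    exact ⟨ht.1, ht.2.trans hx.2⟩

theorem const (a b c : ℝ) : IsTestOn a b (fun _ => c) (fun _ => 0) := by
  refine ⟨fun x _ => ?_, ?_, ?_⟩ <;> simp

theorem integral_deriv_mul_sq (hab : a ≤ b) (hy : IsTestOn a b y g) (hp : IsTestOn a b p p') :
    ∫ x in a..b, (p' x * y x ^ 2 + 2 * p x * y x * g x) = p b * y b ^ 2 - p a * y a ^ 2 := by
  have hy' := hy.absolutelyContinuousOnInterval hab
  have hAC : AbsolutelyContinuousOnInterval (fun x => p x * y x ^ 2) a b := by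
    simpa only [sq] using (hp.absolutelyContinuousOnInterval hab).fun_mul (hy'.fun_mul hy')
  have hb : ∀ᵐ x : ℝ, x ≠ b := by simp [ae_iff, measure_singleton]
  rw [← hAC.integral_deriv_eq_sub]
  refine intervalIntegral.integral_congr_ae ?_
  filter_upwards [hy.ae_hasDerivAt hab, hp.ae_hasDerivAt hab, hb] with x hyx hpx hxb hx
  rw [uIoc_of_le hab] at hx
  have hx' : x ∈ Ioo a b := ⟨hx.1, lt_of_le_of_ne hx.2 hxb⟩
  rw [((hpx hx').fun_mul ((hyx hx').fun_pow 2)).deriv]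
  ring

theorem integral_sq_sub_eq (hab : a ≤ b) (hy : IsTestOn a b y g) (hp : IsTestOn a b p p')
    (lam : ℝ) :
    (∫ x in a..b, g x ^ 2) - lam * ∫ x in a..b, y x ^ 2 =
      (∫ x in a..b, (g x - p x * y x) ^ 2) + (∫ x in a..b, (-lam - p' x - p x ^ 2) * y x ^ 2)
        + (p b * y b ^ 2 - p a * y a ^ 2) := by
  have hyc := hy.continuousOn hab
  have hy2c : ContinuousOn (fun x => y x ^ 2) (uIcc a b) := hyc.pow 2
  have hpyc : ContinuousOn (fun x => p x * y x) (uIcc a b) := (hp.continuousOn hab).mul hyc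
  have hg2 := hy.intervalIntegrable_sq hab
  have hy2 := hy2c.intervalIntegrable (μ := volume)
  have hpyg := (hy.intervalIntegrable hab).continuousOn_mul hpyc
  have hpy2 : IntervalIntegrable (fun x => (p x * y x) ^ 2) volume a b :=
    (hpyc.pow 2).intervalIntegrable
  have hp'y2 := (hp.intervalIntegrable hab).mul_continuousOn hy2c
  have hsq : IntervalIntegrable (fun x => (g x - p x * y x) ^ 2) volume a b := by
    convert (hg2.sub (hpyg.const_mul 2)).add hpy2 using 1
    ext x; ring
  have hdefect : IntervalIntegrable (fun x => (-lam - p' x - p x ^ 2) * y x ^ 2) volume a b := by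
    convert ((hy2.const_mul (-lam)).sub hp'y2).sub hpy2 using 1
    ext x; ring
  have hibp : IntervalIntegrable (fun x => p' x * y x ^ 2 + 2 * p x * y x * g x) volume a b := by
    convert hp'y2.add (hpyg.const_mul 2) using 1
    ext x; ring
  rw [← hy.integral_deriv_mul_sq hab hp, ← intervalIntegral.integral_const_mul,
    ← intervalIntegral.integral_sub hg2 (hy2.const_mul lam),
    ← intervalIntegral.integral_add hsq hdefect,
    ← intervalIntegral.integral_add (hsq.add hdefect) hibp]
  exact intervalIntegral.integral_congr fun x _ => by ring

end IsTestOn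

def rayleighQuotients (k1 ζ : ℝ) : Set ℝ :=
  { r : ℝ | ∃ y g : ℝ → ℝ, IsTestOn ζ 1 y g ∧ (0 < ∫ x in ζ..(1:ℝ), (y x) ^ 2) ∧
    r = ((∫ x in ζ..(1:ℝ), (g x) ^ 2) + k1 ^ 2 * (y 1) ^ 2 - (y ζ) ^ 2 / 2) /
        (∫ x in ζ..(1:ℝ), (y x) ^ 2) }

section Rayleigh

variable {k1 ζ lam : ℝ} {p p' : ℝ → ℝ}

theorem rayleighQuotients_nonempty (hζ : ζ < 1) : (rayleighQuotients k1 ζ).Nonempty :=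
  ⟨_, _, _, IsTestOn.const ζ 1 1, by simpa using hζ, rfl⟩

theorem le_of_mem_rayleighQuotients (hζ : ζ < 1) (hp : IsTestOn ζ 1 p p')
    (hpζ : p ζ ≤ -(1 / 2)) (hp1 : -k1 ^ 2 ≤ p 1) (hric : ∀ x ∈ Icc ζ 1, p' x + p x ^ 2 ≤ -lam) :
    ∀ r ∈ rayleighQuotients k1 ζ, lam ≤ r := by
  rintro r ⟨y, g, hy, hD, rfl⟩
  rw [le_div_iff₀ hD]
  have hs := hy.integral_sq_sub_eq hζ.le hp lam
  have hsq : 0 ≤ ∫ x in ζ..1, (g x - p x * y x) ^ 2 :=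
    intervalIntegral.integral_nonneg hζ.le fun x _ => sq_nonneg _
  have hdefect : 0 ≤ ∫ x in ζ..1, (-lam - p' x - p x ^ 2) * y x ^ 2 :=
    intervalIntegral.integral_nonneg hζ.le fun x hx =>
      mul_nonneg (by linarith [hric x hx]) (sq_nonneg _)
  nlinarith [mul_nonneg (by linarith : 0 ≤ p 1 + k1 ^ 2) (sq_nonneg (y 1)),
    mul_nonneg (by linarith : 0 ≤ -(1 / 2) - p ζ) (sq_nonneg (y ζ))]

theorem bddBelow_rayleighQuotients (hζ : ζ < 1) : BddBelow (rayleighQuotients k1 ζ) := by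
  set β := (1 / 2 - k1 ^ 2) / (1 - ζ)
  have hp : IsTestOn ζ 1 (fun x => -(1 / 2) + (x - ζ) * β) (fun _ => β) :=
    IsTestOn.of_hasDerivAt (fun x _ => by
      simpa using (((hasDerivAt_id x).sub_const ζ).mul_const β).const_add (-(1 / 2)))
      continuousOn_const
  have hp1 : -(1 / 2) + (1 - ζ) * β = -k1 ^ 2 := by
    rw [mul_div_cancel₀ _ (sub_pos.2 hζ).ne']
    ring
  obtain ⟨M, hM⟩ := (isCompact_Icc (a := ζ) (b := 1)).bddAbove_image
    (f := fun x => β + (-(1 / 2) + (x - ζ) * β) ^ 2) (by fun_prop)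
  exact ⟨-M, le_of_mem_rayleighQuotients (lam := -M) hζ hp (by simp) hp1.ge
    fun x hx => by simpa using hM (mem_image_of_mem _ hx)⟩

theorem le_mu1_of_riccati (hζ : ζ < 1) (hp : IsTestOn ζ 1 p p') (hpζ : p ζ ≤ -(1 / 2))
    (hp1 : -k1 ^ 2 ≤ p 1) (hric : ∀ x ∈ Icc ζ 1, p' x + p x ^ 2 ≤ -lam) : lam ≤ mu1 k1 ζ :=
  le_csInf (rayleighQuotients_nonempty hζ) (le_of_mem_rayleighQuotients hζ hp hpζ hp1 hric)

/-- The witness is `c = y(1)² / ∫ y²` for the ground state `y = exp ∫ p`. -/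
theorem exists_mu1_le_of_riccati (hζ : ζ < 1) (hp : IsTestOn ζ 1 p p') (hpζ : p ζ = -(1 / 2))
    (hric : ∀ x ∈ Icc ζ 1, p' x + p x ^ 2 = -lam) :
    ∃ c > 0, mu1 k1 ζ ≤ lam + (p 1 + k1 ^ 2) * c := by
  have hpc : ContinuousOn p (Icc ζ 1) := by simpa [uIcc_of_le hζ.le] using hp.continuousOn hζ.le
  set P := IccExtend hζ.le ((Icc ζ 1).domRestrict p)
  have hPc : Continuous P := hpc.domRestrict.Icc_extend'
  have hP : ∀ x ∈ Icc ζ 1, P x = p x := fun x hx => IccExtend_of_mem hζ.le _ hx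
  set y := fun x => exp (∫ t in ζ..x, P t)
  have hyd : ∀ x, HasDerivAt y (P x * y x) x := fun x => by
    simpa [mul_comm] using (hPc.integral_hasStrictDerivAt ζ x).hasDerivAt.exp
  have hyc : Continuous y := continuous_iff_continuousAt.2 fun x => (hyd x).continuousAt
  have hy : IsTestOn ζ 1 y (fun x => P x * y x) :=
    IsTestOn.of_hasDerivAt (fun x _ => hyd x) (hPc.mul hyc).continuousOn
  have hD : 0 < ∫ x in ζ..1, y x ^ 2 :=
    intervalIntegral.intervalIntegral_pos_of_pos_on ((hyc.pow 2).intervalIntegrable _ _)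
      (fun x _ => by positivity) hζ
  have hs := hy.integral_sq_sub_eq hζ.le hp lam
  have hsq : ∫ x in ζ..1, (P x * y x - p x * y x) ^ 2 = 0 := by
    rw [intervalIntegral.integral_congr (g := fun _ => 0) fun x hx => ?_,
      intervalIntegral.integral_zero]
    rw [uIcc_of_le hζ.le] at hx
    simp [hP x hx]
  have hdefect : ∫ x in ζ..1, (-lam - p' x - p x ^ 2) * y x ^ 2 = 0 := by
    rw [intervalIntegral.integral_congr (g := fun _ => 0) fun x hx => ?_,
      intervalIntegral.integral_zero]
    rw [uIcc_of_le hζ.le] at hx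
    simp only
    rw [show -lam - p' x - p x ^ 2 = 0 by linarith [hric x hx], zero_mul]
  refine ⟨y 1 ^ 2 / ∫ x in ζ..1, y x ^ 2, by positivity,
    csInf_le (bddBelow_rayleighQuotients hζ) ⟨y, _, hy, hD, ?_⟩⟩
  rw [hsq, hdefect, hpζ] at hs
  generalize ∫ x in ζ..1, (P x * y x) ^ 2 = N at hs ⊢
  field_simp
  linarith

end Rayleigh

section ConstantGroundState

variable {k1 ζ : ℝ}

theorem exists_mu1_le_neg_quarter_add (hζ : ζ < 1) :
    ∃ c > 0, mu1 k1 ζ ≤ -(1 / 4) + (k1 ^ 2 - 1 / 2) * c := by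
  obtain ⟨c, hc, h⟩ := exists_mu1_le_of_riccati (k1 := k1) (lam := -(1 / 4)) hζ
    (IsTestOn.const ζ 1 (-(1 / 2))) rfl fun _ _ => by norm_num
  exact ⟨c, hc, h.trans_eq (by ring)⟩

theorem neg_quarter_le_mu1 (hk : 1 / 2 ≤ k1 ^ 2) (hζ : ζ < 1) : -(1 / 4) ≤ mu1 k1 ζ :=
  le_mu1_of_riccati hζ (IsTestOn.const ζ 1 (-(1 / 2))) le_rfl (by linarith) fun _ _ => by norm_num

end ConstantGroundState

theorem StrictMonoOn.hasDerivAt_invFunOn {f : ℝ → ℝ} {s : Set ℝ} {x f' : ℝ}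
    (hmono : StrictMonoOn f s) (hcont : ContinuousOn f s) (hs : s ∈ 𝓝 x) (hf : HasDerivAt f f' x)
    (hf' : f' ≠ 0) : HasDerivAt (Function.invFunOn f s) f'⁻¹ (f x) := by
  have hleft : LeftInvOn (Function.invFunOn f s) f s := hmono.injOn.leftInvOn_invFunOn
  obtain ⟨l, u, ⟨hlx, hxu⟩, hlu⟩ := mem_nhds_iff_exists_Ioo_subset.1 hs
  obtain ⟨c, hlc, hcx⟩ := exists_between hlx
  obtain ⟨d, hxd, hdu⟩ := exists_between hxu
  have hcd : Icc c d ⊆ s := (Icc_subset_Ioo hlc hdu).trans hlu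
  have hxs : x ∈ s := hcd ⟨hcx.le, hxd.le⟩
  have himage : Ioo (f c) (f d) ⊆ f '' Icc c d :=
    Ioo_subset_Icc_self.trans (intermediate_value_Icc (hcx.trans hxd).le (hcont.mono hcd))
  have hnhds : Ioo (f c) (f d) ∈ 𝓝 (f x) :=
    Ioo_mem_nhds (hmono (hcd ⟨le_rfl, (hcx.trans hxd).le⟩) hxs hcx)
      (hmono hxs (hcd ⟨(hcx.trans hxd).le, le_rfl⟩) hxd)
  have hmonoInv : MonotoneOn (Function.invFunOn f s) (Ioo (f c) (f d)) := by
    intro t₁ ht₁ t₂ ht₂ ht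
    obtain ⟨u₁, hu₁, rfl⟩ := himage ht₁
    obtain ⟨u₂, hu₂, rfl⟩ := himage ht₂
    rw [hleft (hcd hu₁), hleft (hcd hu₂)]
    exact (hmono.le_iff_le (hcd hu₁) (hcd hu₂)).1 ht
  have himageInv :
      Function.invFunOn f s '' Ioo (f c) (f d) ∈ 𝓝 (Function.invFunOn f s (f x)) := by
    rw [hleft hxs]
    refine mem_of_superset (Ioo_mem_nhds hcx hxd) fun v hv => ?_
    have hv' : v ∈ s := hcd (Ioo_subset_Icc_self hv)
    exact ⟨f v, ⟨hmono (hcd ⟨le_rfl, (hcx.trans hxd).le⟩) hv' hv.1,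
      hmono hv' (hcd ⟨(hcx.trans hxd).le, le_rfl⟩) hv.2⟩, hleft hv'⟩
  rw [← hleft hxs] at hf
  refine hf.of_local_left_inverse
    (continuousAt_of_monotoneOn_of_image_mem_nhds hmonoInv hnhds himageInv) hf' ?_
  filter_upwards [hnhds] with t ht
  obtain ⟨v, hv, hvt⟩ := himage ht
  exact Function.invFunOn_eq ⟨v, hcd hv, hvt⟩

/-- Separating variables in `q' = lam + q²`: the time the solution needs to travel from `1/2`
to `u`. -/
noncomputable def riccatiTime (lam u : ℝ) : ℝ :=
  ∫ v in (1 / 2 : ℝ)..u, (lam + v ^ 2)⁻¹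

section RiccatiTime

variable {lam u K : ℝ}

theorem lam_add_sq_pos (hlam : -(1 / 4) < lam) {v : ℝ} (hv : 1 / 4 - lam < v) :
    0 < lam + v ^ 2 := by
  nlinarith [sq_nonneg (lam + 1 / 4), sq_nonneg (v - (1 / 4 - lam))]

theorem continuousOn_lam_add_sq_inv (hlam : -(1 / 4) < lam) :
    ContinuousOn (fun v => (lam + v ^ 2)⁻¹) (Ioi (1 / 4 - lam)) :=
  (continuousOn_const.add (continuousOn_id.pow 2)).inv₀ fun _ hv => (lam_add_sq_pos hlam hv).ne'

theorem hasDerivAt_riccatiTime (hlam : -(1 / 4) < lam) (hu : 1 / 4 - lam < u) :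
    HasDerivAt (riccatiTime lam) (lam + u ^ 2)⁻¹ u := by
  have hcont := continuousOn_lam_add_sq_inv hlam
  have hsub : uIcc (1 / 2) u ⊆ Ioi (1 / 4 - lam) := fun v hv =>
    lt_of_lt_of_le (lt_min (by linarith) hu) hv.1
  exact intervalIntegral.integral_hasDerivAt_right ((hcont.mono hsub).intervalIntegrable)
    (hcont.stronglyMeasurableAtFilter isOpen_Ioi u hu) (hcont.continuousAt (Ioi_mem_nhds hu))

theorem exists_riccati_solution (hlam : -(1 / 4) < lam) (hK : 1 / 2 ≤ K) :
    ∃ q : ℝ → ℝ, q 0 = 1 / 2 ∧ q (riccatiTime lam K) = K ∧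
      ∀ t ∈ Icc 0 (riccatiTime lam K), HasDerivAt q (lam + q t ^ 2) t := by
  set s := Ioi (1 / 4 - lam)
  have hder : ∀ u ∈ s, HasDerivAt (riccatiTime lam) (lam + u ^ 2)⁻¹ u :=
    fun u hu => hasDerivAt_riccatiTime hlam hu
  have hcont : ContinuousOn (riccatiTime lam) s :=
    fun u hu => (hder u hu).continuousAt.continuousWithinAt
  have hmono : StrictMonoOn (riccatiTime lam) s := by
    refine strictMonoOn_of_deriv_pos (convex_Ioi _) hcont fun u hu => ?_
    rw [interior_Ioi] at hu
    rw [(hder u hu).deriv]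
    exact inv_pos.2 (lam_add_sq_pos hlam hu)
  have hleft : LeftInvOn (Function.invFunOn (riccatiTime lam) s) (riccatiTime lam) s :=
    hmono.injOn.leftInvOn_invFunOn
  have hhalf : (1 / 2 : ℝ) ∈ s := show 1 / 4 - lam < 1 / 2 by linarith
  have hIcc : Icc (1 / 2) K ⊆ s := fun u hu => lt_of_lt_of_le hhalf hu.1
  have hzero : riccatiTime lam (1 / 2) = 0 := intervalIntegral.integral_same
  refine ⟨Function.invFunOn (riccatiTime lam) s, ?_, hleft (hIcc ⟨hK, le_rfl⟩), fun t ht => ?_⟩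
  · rw [← hzero, hleft hhalf]
  rw [← hzero] at ht
  obtain ⟨u, hu, rfl⟩ := intermediate_value_Icc hK (hcont.mono hIcc) ht
  convert hmono.hasDerivAt_invFunOn hcont (Ioi_mem_nhds (hIcc hu)) (hder u (hIcc hu))
    (inv_pos.2 (lam_add_sq_pos hlam (hIcc hu))).ne' using 1
  rw [inv_inv, hleft (hIcc hu)]

end RiccatiTime

theorem mu1_eq_of_riccatiTime_eq {k1 ζ lam : ℝ} (hk : 1 / 2 ≤ k1 ^ 2) (hlam : -(1 / 4) < lam)
    (hζ : ζ < 1) (hT : riccatiTime lam (k1 ^ 2) = 1 - ζ) : mu1 k1 ζ = lam := by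
  obtain ⟨q, hq0, hqT, hq⟩ := exists_riccati_solution hlam hk
  rw [hT] at hqT hq
  set p := fun x => -q (x - ζ)
  have hpd : ∀ x ∈ Icc ζ 1, HasDerivAt p (-(lam + p x ^ 2)) x := fun x hx => by
    have hxζ : x - ζ ∈ Icc 0 (1 - ζ) := ⟨sub_nonneg.2 hx.1, by linarith [hx.2]⟩
    simpa [p] using ((hq _ hxζ).comp_sub_const x ζ).fun_neg
  have hp : IsTestOn ζ 1 p (fun x => -(lam + p x ^ 2)) :=
    IsTestOn.of_hasDerivAt hpd fun x hx =>
      ((hpd x hx).continuousAt.pow 2).const_add lam |>.neg |>.continuousWithinAt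
  have hpζ : p ζ = -(1 / 2) := by simp [p, hq0]
  have hp1 : p 1 = -k1 ^ 2 := by simp [p, hqT]
  have hric : ∀ x ∈ Icc ζ 1, -(lam + p x ^ 2) + p x ^ 2 = -lam := fun _ _ => by ring
  obtain ⟨c, -, hc⟩ := exists_mu1_le_of_riccati (k1 := k1) hζ hp hpζ hric
  refine le_antisymm (by simpa [hp1] using hc) ?_
  exact le_mu1_of_riccati hζ hp hpζ.le hp1.ge fun x hx => (hric x hx).le

section RiccatiTimeInLam

variable {K : ℝ}

theorem intervalIntegrable_lam_add_sq_inv {lam : ℝ} (hlam : -(1 / 4) < lam) (hK : 1 / 2 ≤ K) :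
    IntervalIntegrable (fun v => (lam + v ^ 2)⁻¹) volume (1 / 2) K :=
  ((continuousOn_lam_add_sq_inv hlam).mono fun v hv => by
    rw [uIcc_of_le hK] at hv; exact show 1 / 4 - lam < v by linarith [hv.1]).intervalIntegrable

theorem riccatiTime_pos (hK : 1 / 2 < K) {lam : ℝ} (hlam : -(1 / 4) < lam) :
    0 < riccatiTime lam K :=
  intervalIntegral.intervalIntegral_pos_of_pos_on (intervalIntegrable_lam_add_sq_inv hlam hK.le)
    (fun _ hv => inv_pos.2 (lam_add_sq_pos hlam (by linarith [hv.1]))) hK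

theorem antitoneOn_riccatiTime (hK : 1 / 2 ≤ K) :
    AntitoneOn (fun lam => riccatiTime lam K) (Ioi (-(1 / 4))) := by
  intro lam₁ hlam₁ lam₂ hlam₂ hle
  refine intervalIntegral.integral_mono_on hK (intervalIntegrable_lam_add_sq_inv hlam₂ hK)
    (intervalIntegrable_lam_add_sq_inv hlam₁ hK) fun v hv => ?_
  exact inv_anti₀ (lam_add_sq_pos hlam₁ (by linarith [hv.1, mem_Ioi.1 hlam₁])) (by linarith)

theorem riccatiTime_le (hK : 1 / 2 ≤ K) {lam : ℝ} (hlam : -(1 / 4) < lam) :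
    riccatiTime lam K ≤ (K - 1 / 2) / (lam + 1 / 4) := by
  calc riccatiTime lam K ≤ ∫ _ in (1 / 2 : ℝ)..K, (lam + 1 / 4)⁻¹ :=
        intervalIntegral.integral_mono_on hK (intervalIntegrable_lam_add_sq_inv hlam hK)
          intervalIntegrable_const fun v hv => inv_anti₀ (by linarith) (by nlinarith [hv.1])
    _ = (K - 1 / 2) / (lam + 1 / 4) := by simp [div_eq_mul_inv]

theorem tendsto_riccatiTime_atTop (hK : 1 / 2 ≤ K) :
    Tendsto (fun lam => riccatiTime lam K) atTop (𝓝 0) := by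
  have hbound : Tendsto (fun lam : ℝ => (K - 1 / 2) / (lam + 1 / 4)) atTop (𝓝 0) :=
    tendsto_const_nhds.div_atTop (tendsto_atTop_add_const_right _ _ tendsto_id)
  refine squeeze_zero' ?_ ?_ hbound
  · filter_upwards [eventually_gt_atTop (-(1 / 4))] with lam hlam
    exact intervalIntegral.integral_nonneg hK fun v hv =>
      (inv_pos.2 (lam_add_sq_pos hlam (by linarith [hv.1]))).le
  · filter_upwards [eventually_gt_atTop (-(1 / 4))] with lam hlam
    exact riccatiTime_le hK hlam

theorem continuousOn_riccatiTime (hK : 1 / 2 ≤ K) :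
    ContinuousOn (fun lam => riccatiTime lam K) (Ioi (-(1 / 4))) := by
  intro lam₀ hlam₀
  set m := (lam₀ - 1 / 4) / 2
  have hm : -(1 / 4) < m := by simp only [m]; linarith [mem_Ioi.1 hlam₀]
  have hnear : ∀ᶠ lam in 𝓝 lam₀, m < lam :=
    Ioi_mem_nhds (by simp only [m]; linarith [mem_Ioi.1 hlam₀])
  refine ContinuousAt.continuousWithinAt (intervalIntegral.continuousAt_of_dominated_interval
    (bound := fun _ => (m + 1 / 4)⁻¹) (Eventually.of_forall fun lam => by fun_prop) ?_
    intervalIntegrable_const ?_)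
  · filter_upwards [hnear] with lam hlam
    refine Eventually.of_forall fun v hv => ?_
    rw [uIoc_of_le hK] at hv
    have hv2 : 1 / 4 < v ^ 2 := by nlinarith [hv.1]
    rw [Real.norm_of_nonneg (inv_pos.2 (by linarith)).le]
    exact inv_anti₀ (by linarith) (by linarith)
  · refine Eventually.of_forall fun v hv => ?_
    rw [uIoc_of_le hK] at hv
    exact (continuousAt_id.add continuousAt_const).inv₀
      (lam_add_sq_pos (mem_Ioi.1 hlam₀) (by linarith [hv.1, mem_Ioi.1 hlam₀])).ne'

theorem log_div_le_riccatiTime (hK : 1 / 2 < K) {lam : ℝ} (hlam : -(1 / 4) < lam) :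
    (log ((K + 1 / 2) * (K - 1 / 2)) - log (lam + 1 / 4)) / (K + 1 / 2) ≤
      riccatiTime lam K := by
  set C := K + 1 / 2
  set ε := lam + 1 / 4
  set A := C * (K - 1 / 2)
  have hC : 0 < C := by simp only [C]; linarith
  have hε : 0 < ε := by simp only [ε]; linarith
  have hA : 0 < A := mul_pos hC (by linarith)
  have hpos : ∀ v ∈ Icc (1 / 2) K, 0 < C * v + (ε - C / 2) := fun v hv => by
    nlinarith [hv.1]
  have hcmp : ∫ v in (1 / 2 : ℝ)..K, (C * v + (ε - C / 2))⁻¹ ≤ riccatiTime lam K := by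
    refine intervalIntegral.integral_mono_on hK.le ?_
      (intervalIntegrable_lam_add_sq_inv hlam hK.le) fun v hv => ?_
    · refine ContinuousOn.intervalIntegrable ((continuousOn_const.mul continuousOn_id).add
        continuousOn_const |>.inv₀ fun v hv => (hpos v ?_).ne')
      rwa [uIcc_of_le hK.le] at hv
    · refine inv_anti₀ (lam_add_sq_pos hlam (by linarith [hv.1])) ?_
      simp only [C, ε]
      nlinarith [mul_nonneg (sub_nonneg.2 hv.1) (sub_nonneg.2 hv.2)]
  have hsubst : ∫ v in (1 / 2 : ℝ)..K, (C * v + (ε - C / 2))⁻¹ = C⁻¹ * log ((ε + A) / ε) := by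
    have := intervalIntegral.integral_comp_mul_add (a := 1 / 2) (b := K) (fun w : ℝ => w⁻¹)
      hC.ne' (ε - C / 2)
    rw [show C * (1 / 2) + (ε - C / 2) = ε by ring, show C * K + (ε - C / 2) = ε + A by ring,
      integral_inv_of_pos hε (by positivity)] at this
    exact this
  have hlog : log A - log ε ≤ log ((ε + A) / ε) := by
    rw [← log_div hA.ne' hε.ne']
    exact log_le_log (div_pos hA hε) (div_le_div_of_nonneg_right (by linarith) hε.le)
  calc (log A - log ε) / C ≤ C⁻¹ * log ((ε + A) / ε) := by
        rw [div_eq_inv_mul]; exact mul_le_mul_of_nonneg_left hlog (inv_pos.2 hC).le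
    _ ≤ riccatiTime lam K := hsubst ▸ hcmp

theorem tendsto_riccatiTime_nhdsGT (hK : 1 / 2 < K) :
    Tendsto (fun lam => riccatiTime lam K) (𝓝[>] (-(1 / 4))) atTop := by
  have hshift : Tendsto (fun lam : ℝ => lam + 1 / 4) (𝓝[>] (-(1 / 4))) (𝓝[>] 0) := by
    refine tendsto_nhdsWithin_of_tendsto_nhds_of_eventually_within _ ?_ ?_
    · exact ((continuous_add_const _).tendsto' _ _ (by norm_num)).mono_left nhdsWithin_le_nhds
    · filter_upwards [self_mem_nhdsWithin] with lam (hlam : -(1 / 4) < lam)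
      exact show 0 < lam + 1 / 4 by linarith
  have hlog := (tendsto_atTop_add_const_left _ (log ((K + 1 / 2) * (K - 1 / 2)))
    (tendsto_neg_atBot_atTop.comp (tendsto_log_nhdsGT_zero.comp hshift))).atTop_div_const
    (show 0 < K + 1 / 2 by linarith)
  refine tendsto_atTop_mono' _ ?_ hlog
  filter_upwards [self_mem_nhdsWithin] with lam hlam
  simpa [sub_eq_add_neg] using log_div_le_riccatiTime hK hlam

theorem exists_riccatiTime_eq (hK : 1 / 2 < K) {L : ℝ} (hL : 0 < L) :
    ∃ lam, -(1 / 4) < lam ∧ riccatiTime lam K = L := by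
  obtain ⟨lam₀, hL₀, hlam₀⟩ :=
    (((tendsto_riccatiTime_nhdsGT hK).eventually_ge_atTop L).and self_mem_nhdsWithin).exists
  obtain ⟨lam₁, hL₁, hle⟩ :=
    (((tendsto_order.1 (tendsto_riccatiTime_atTop hK.le)).2 L hL).and
      (eventually_ge_atTop lam₀)).exists
  obtain ⟨lam, hlam, hT⟩ := intermediate_value_Icc' hle
    ((continuousOn_riccatiTime hK.le).mono fun x hx => lt_of_lt_of_le hlam₀ hx.1) ⟨hL₁.le, hL₀⟩
  exact ⟨lam, lt_of_lt_of_le hlam₀ hlam.1, hT⟩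

end RiccatiTimeInLam

section LargeRobinParameter

variable {k1 : ℝ}

theorem mu1_mem_Ioi_and_riccatiTime_eq (hk : 1 / 2 < k1 ^ 2) {ζ : ℝ} (hζ : ζ < 1) :
    -(1 / 4) < mu1 k1 ζ ∧ riccatiTime (mu1 k1 ζ) (k1 ^ 2) = 1 - ζ := by
  obtain ⟨lam, hlam, hT⟩ := exists_riccatiTime_eq hk (sub_pos.2 hζ)
  rw [mu1_eq_of_riccatiTime_eq hk.le hlam hζ hT]
  exact ⟨hlam, hT⟩

theorem strictMonoOn_mu1 (hk : 1 / 2 < k1 ^ 2) : StrictMonoOn (mu1 k1) (Iio 1) := by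
  intro ζ₁ hζ₁ ζ₂ hζ₂ hlt
  obtain ⟨hmem₁, hT₁⟩ := mu1_mem_Ioi_and_riccatiTime_eq hk hζ₁
  obtain ⟨hmem₂, hT₂⟩ := mu1_mem_Ioi_and_riccatiTime_eq hk hζ₂
  exact (antitoneOn_riccatiTime hk.le).reflect_lt hmem₂ hmem₁ (by simp only [hT₁, hT₂]; linarith)

theorem tendsto_mu1_nhdsLT (hk : 1 / 2 < k1 ^ 2) :
    Tendsto (mu1 k1) (𝓝[<] 1) atTop := by
  refine tendsto_atTop.2 fun M => ?_
  have hM : -(1 / 4) < max M 0 := lt_max_of_lt_right (by norm_num)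
  have hpos := riccatiTime_pos hk hM
  filter_upwards [mem_nhdsWithin_of_mem_nhds
    (Ioi_mem_nhds (show 1 - riccatiTime (max M 0) (k1 ^ 2) < 1 by linarith)),
    self_mem_nhdsWithin] with ζ hζ hζ₁
  obtain ⟨hmem, hT⟩ := mu1_mem_Ioi_and_riccatiTime_eq hk hζ₁
  refine (le_max_left M 0).trans ((antitoneOn_riccatiTime hk.le).reflect_lt hmem hM ?_).le
  simp only [hT]
  linarith [mem_Ioi.1 hζ]

end LargeRobinParameter

theorem stmt17_general (k1 : ℝ) :
    (k1 ^ 2 = 1 / 2 → ∀ ζ ∈ Ico (0:ℝ) 1, mu1 k1 ζ = -(1 / 4)) ∧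
    (k1 ^ 2 > 1 / 2 →
      StrictMonoOn (mu1 k1) (Ico (0:ℝ) 1) ∧
      Tendsto (mu1 k1) (nhdsWithin 1 (Ico (0:ℝ) 1)) atTop ∧
      -(1 / 4) < mu1 k1 0) ∧
    (k1 ^ 2 < 1 / 2 → ∀ ζ ∈ Ico (0:ℝ) 1, mu1 k1 ζ < -(1 / 4)) := by
  refine ⟨fun hk ζ hζ => ?_, fun hk => ⟨?_, ?_, ?_⟩, fun hk ζ hζ => ?_⟩
  · obtain ⟨c, -, hc⟩ := exists_mu1_le_neg_quarter_add (k1 := k1) hζ.2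
    exact le_antisymm (by simpa [hk] using hc) (neg_quarter_le_mu1 hk.ge hζ.2)
  · exact (strictMonoOn_mu1 hk).mono fun ζ hζ => hζ.2
  · exact (tendsto_mu1_nhdsLT hk).mono_left (nhdsWithin_mono _ fun ζ hζ => hζ.2)
  · exact (mu1_mem_Ioi_and_riccatiTime_eq hk one_pos).1
  · obtain ⟨c, hc, hle⟩ := exists_mu1_le_neg_quarter_add (k1 := k1) hζ.2
    nlinarith

theorem stmt17 (k1 : ℝ) (hk1 : 0 ≤ k1) :
    (k1 ^ 2 = 1 / 2 → ∀ ζ ∈ Ico (0:ℝ) 1, mu1 k1 ζ = -(1 / 4)) ∧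
    (k1 ^ 2 > 1 / 2 →
      StrictMonoOn (mu1 k1) (Ico (0:ℝ) 1) ∧
      Tendsto (mu1 k1) (nhdsWithin 1 (Ico (0:ℝ) 1)) atTop ∧
      -(1 / 4) < mu1 k1 0) ∧
    (k1 ^ 2 < 1 / 2 → ∀ ζ ∈ Ico (0:ℝ) 1, mu1 k1 ζ < -(1 / 4)) :=
  stmt17_general k1
end

section
/- λ₁(δ₁) ≤ λ₁(δ₀); that is, inf{ (∫₀¹ y'(x)² dx + k₀² y(0)² + (k₁² + 1) y(1)²) / ∫₀¹ y(x)² dx : y a test function not a.e. zero } ≤ inf{ (∫₀¹ y'(x)² dx + (k₀² + 1) y(0)² + k₁² y(1)²) / ∫₀¹ y(x)² dx : y a test function not a.e. zero }. -/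
open MeasureTheory Set Real Filter

/-- Reflection of a test function is a test function. -/
lemma isTest_reflect {y g : ℝ → ℝ} (hT : IsTest y g) :
    IsTest (fun x => y (1 - x)) (fun t => -g (1 - t)) := by
  obtain ⟨hac, hg, hg2⟩ := hT
  have hg1 : IntervalIntegrable g volume 0 1 :=
    (intervalIntegrable_iff_integrableOn_Icc_of_le (by norm_num)).2 hg
  refine ⟨?_, ?_, ?_⟩
  · intro x hx
    have h1x : (1 - x) ∈ Icc (0:ℝ) 1 := ⟨by linarith [hx.2], by linarith [hx.1]⟩
    have e1 : y (1 - x) = y 0 + ∫ t in (0:ℝ)..(1 - x), g t := hac _ h1x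
    have e2 : y (1 - 0) = y 0 + ∫ t in (0:ℝ)..1, g t := by
      simpa using hac 1 (by norm_num)
    have e3 : (∫ t in (0:ℝ)..x, -g (1 - t)) = -(∫ s in (1 - x)..1, g s) := by
      rw [intervalIntegral.integral_neg, intervalIntegral.integral_comp_sub_left g 1]
      norm_num
    have e4 : (∫ t in (0:ℝ)..(1-x), g t) + (∫ s in (1 - x)..1, g s) = ∫ t in (0:ℝ)..1, g t := by
      apply intervalIntegral.integral_add_adjacent_intervals
      · refine hg1.mono_set ?_
        rw [uIcc_of_le h1x.1, uIcc_of_le (by norm_num : (0:ℝ) ≤ 1)]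
        exact Icc_subset_Icc le_rfl h1x.2
      · refine hg1.mono_set ?_
        rw [uIcc_of_le h1x.2, uIcc_of_le (by norm_num : (0:ℝ) ≤ 1)]
        exact Icc_subset_Icc h1x.1 le_rfl
    show y (1 - x) = y (1 - 0) + ∫ t in (0:ℝ)..x, -g (1 - t)
    rw [e1, e2, e3]
    linarith
  · have := ((hg1.comp_sub_left 1).symm.neg :
      IntervalIntegrable (fun t => -g (1 - t)) volume (1-1) (1-0))
    have h2 : IntervalIntegrable (fun t => -g (1 - t)) volume 0 1 := by norm_num at this; exact this
    exact (intervalIntegrable_iff_integrableOn_Icc_of_le (by norm_num)).1 h2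
  · have hg21 : IntervalIntegrable (fun x => (g x)^2) volume 0 1 :=
      (intervalIntegrable_iff_integrableOn_Icc_of_le (by norm_num)).2 hg2
    have := ((hg21.comp_sub_left 1).symm :
      IntervalIntegrable (fun t => (g (1 - t))^2) volume (1-1) (1-0))
    have h2 : IntervalIntegrable (fun t => (-g (1 - t))^2) volume 0 1 := by
      norm_num at this ⊢; exact this
    exact (intervalIntegrable_iff_integrableOn_Icc_of_le (by norm_num)).1 h2

/-- `λ₁(δ₁) ≤ λ₁(δ₀)`. -/
theorem stmt19 (k0 k1 : ℝ) (hk0 : 0 ≤ k0) (hk01 : k0 ≤ k1) :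
    lam1Delta k0 k1 1 1 ≤ lam1Delta k0 k1 1 0 := by
  unfold lam1Delta
  have hbdd : BddBelow { r : ℝ | ∃ y g : ℝ → ℝ, IsTest y g ∧ (0 < ∫ x in (0:ℝ)..1, (y x) ^ 2) ∧
      r = ((∫ x in (0:ℝ)..1, (g x) ^ 2) + 1 * (y 1) ^ 2
            + k0 ^ 2 * (y 0) ^ 2 + k1 ^ 2 * (y 1) ^ 2) / (∫ x in (0:ℝ)..1, (y x) ^ 2) } := by
    refine ⟨0, ?_⟩
    rintro r ⟨y, g, hT, hI, rfl⟩
    have hnum : 0 ≤ (∫ x in (0:ℝ)..1, (g x) ^ 2) + 1 * (y 1) ^ 2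
        + k0 ^ 2 * (y 0) ^ 2 + k1 ^ 2 * (y 1) ^ 2 := by
      have h1 : 0 ≤ ∫ x in (0:ℝ)..1, (g x) ^ 2 :=
        intervalIntegral.integral_nonneg (by norm_num) (fun u _ => sq_nonneg _)
      positivity
    positivity
  have hne : Set.Nonempty { r : ℝ | ∃ y g : ℝ → ℝ, IsTest y g ∧ (0 < ∫ x in (0:ℝ)..1, (y x) ^ 2) ∧
      r = ((∫ x in (0:ℝ)..1, (g x) ^ 2) + 1 * (y 0) ^ 2
            + k0 ^ 2 * (y 0) ^ 2 + k1 ^ 2 * (y 1) ^ 2) / (∫ x in (0:ℝ)..1, (y x) ^ 2) } := by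
    refine ⟨_, (fun _ => (1:ℝ)), (fun _ => (0:ℝ)), ⟨?_, ?_, ?_⟩, ?_, rfl⟩
    · intro x _; simp
    · simp [IntegrableOn]
    · simp [IntegrableOn]
    · simp
  refine le_csInf hne ?_
  rintro r ⟨y, g, hT, hI, rfl⟩
  have hgint : 0 ≤ ∫ x in (0:ℝ)..1, (g x) ^ 2 :=
    intervalIntegral.integral_nonneg (by norm_num) (fun u _ => sq_nonneg _)
  by_cases hc : (y 1) ^ 2 ≤ (y 0) ^ 2
  · refine csInf_le_of_le hbdd ⟨y, g, hT, hI, rfl⟩ ?_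
    apply div_le_div_of_nonneg_right ?_ hI.le
    nlinarith [hgint]
  · push_neg at hc
    set z : ℝ → ℝ := fun x => y (1 - x) with hz
    set h : ℝ → ℝ := fun t => -g (1 - t) with hh
    have hTz : IsTest z h := isTest_reflect hT
    have hz0 : z 0 = y 1 := by simp [hz]
    have hz1 : z 1 = y 0 := by simp [hz]
    have hIz : (∫ x in (0:ℝ)..1, (z x) ^ 2) = ∫ x in (0:ℝ)..1, (y x) ^ 2 := by
      have := intervalIntegral.integral_comp_sub_left (fun x => (y x)^2) 1 (a := 0) (b := 1)
      norm_num at this; exact this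
    have hIh : (∫ x in (0:ℝ)..1, (h x) ^ 2) = ∫ x in (0:ℝ)..1, (g x) ^ 2 := by
      have := intervalIntegral.integral_comp_sub_left (fun x => (g x)^2) 1 (a := 0) (b := 1)
      norm_num at this
      simp only [hh, neg_sq]
      exact this
    refine csInf_le_of_le hbdd ⟨z, h, hTz, by rw [hIz]; exact hI, rfl⟩ ?_
    rw [hz0, hz1, hIz, hIh]
    apply div_le_div_of_nonneg_right ?_ hI.le
    nlinarith [hgint, sq_nonneg (y 0), sq_nonneg (y 1), mul_le_mul_of_nonneg_right (mul_self_le_mul_self hk0 hk01) (sub_nonneg.2 hc.le), sq_nonneg k0, sq_nonneg k1]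
end
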